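/- arXiv:1608.06011 — 9 statements merged into one kernel-verified Lean document; each statement's English description precedes it below -/
import Mathlib

section
/- Let n ≥ 1 and let w_0, …, w_n be n+1 unit vectors in C^n. Then the minimum, over all index choices 0 ≤ j_1 < … < j_n ≤ n, of |det(w_{j_1}, …, w_{j_n})| is at most sqrt((n+1)^(n-1) / n^n). -/
/-!
Let `W` be the `n × (n+1)` matrix with columns `w j` and `G = Wᴴ W` its Gram matrix, with
eigenvalues `μ₀, …, μₙ ≥ 0`. The diagonal entries of `adj G` are the principal minors
`|det W_{-j}|²`, while diagonalising `G` shows `tr (adj G) = ∑ᵢ ∏_{k ≠ i} μₖ`. Since `G` has rank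
at most `n`, some `μ_{i₀}` vanishes and only the product `∏_{k ≠ i₀} μₖ` survives; its `n`
factors sum to `tr G = n + 1`, so by AM-GM `∑ⱼ |det W_{-j}|² ≤ ((n+1)/n)ⁿ`. The smallest of the
`n + 1` squared minors is at most their mean, `((n+1)/n)ⁿ / (n+1) = (n+1)ⁿ⁻¹ / nⁿ`.
-/

open Matrix Finset

theorem Finset.sum_prod_erase_of_eq_zero {ι R : Type*} [Fintype ι] [DecidableEq ι] [CommSemiring R]
    {f : ι → R} {i₀ : ι} (h : f i₀ = 0) :
    ∑ i, ∏ k ∈ univ.erase i, f k = ∏ k ∈ univ.erase i₀, f k :=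
  Fintype.sum_eq_single i₀ fun _ hi => prod_eq_zero (mem_erase.mpr ⟨Ne.symm hi, mem_univ _⟩) h

theorem Real.prod_le_mean_pow_card {ι : Type*} (s : Finset ι) {z : ι → ℝ}
    (hz : ∀ i ∈ s, 0 ≤ z i) : ∏ i ∈ s, z i ≤ ((∑ i ∈ s, z i) / #s) ^ #s := by
  rcases s.eq_empty_or_nonempty with rfl | hs
  · simp
  have hgm := geom_mean_le_arith_mean s 1 z (fun _ _ => zero_le_one) (by simpa using hs.card_pos) hz
  simp only [Pi.one_apply, rpow_one, sum_const, nsmul_eq_mul, mul_one, one_mul] at hgm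
  calc ∏ i ∈ s, z i = ((∏ i ∈ s, z i) ^ ((#s : ℕ) : ℝ)⁻¹) ^ #s :=
        (rpow_inv_natCast_pow (prod_nonneg hz) hs.card_pos.ne').symm
    _ ≤ _ := pow_le_pow_left₀ (rpow_nonneg (prod_nonneg hz) _) hgm _

theorem Real.sum_prod_erase_le_of_eq_zero {ι : Type*} [Fintype ι] [DecidableEq ι] {n : ℕ}
    (hcard : Fintype.card ι = n + 1) {μ : ι → ℝ} (hμ : ∀ i, 0 ≤ μ i) {i₀ : ι} (h : μ i₀ = 0) :
    ∑ i, ∏ k ∈ univ.erase i, μ k ≤ ((∑ i, μ i) / n) ^ n := by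
  have hn : #(univ.erase i₀) = n := by rw [card_erase_of_mem (mem_univ _), card_univ, hcard]; rfl
  rw [sum_prod_erase_of_eq_zero h, ← add_sum_erase _ _ (mem_univ i₀), h, zero_add, ← hn]
  exact prod_le_mean_pow_card _ fun i _ => hμ i

namespace Matrix

variable {𝕜 : Type*} [RCLike 𝕜]

theorem IsHermitian.exists_eigenvalues_eq_zero_of_rank_lt {ι : Type*} [Fintype ι] [DecidableEq ι]
    {A : Matrix ι ι 𝕜} (hA : A.IsHermitian) (h : A.rank < Fintype.card ι) :
    ∃ i, hA.eigenvalues i = 0 := by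
  by_contra! hne
  rw [hA.rank_eq_card_non_zero_eigs, Fintype.card_congr (Equiv.subtypeUnivEquiv hne)] at h
  exact lt_irrefl _ h

theorem IsHermitian.trace_adjugate {ι : Type*} [Fintype ι] [DecidableEq ι]
    {A : Matrix ι ι 𝕜} (hA : A.IsHermitian) :
    A.adjugate.trace = ∑ i, ∏ k ∈ univ.erase i, (hA.eigenvalues k : 𝕜) := by
  set U : Matrix ι ι 𝕜 := ↑hA.eigenvectorUnitary
  have hUU : star U * U = 1 := (mem_unitaryGroup_iff').mp hA.eigenvectorUnitary.2
  have hspec : A = U * diagonal (RCLike.ofReal ∘ hA.eigenvalues) * star U := hA.spectral_theorem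
  conv_lhs => rw [hspec]
  rw [adjugate_mul_distrib, adjugate_mul_distrib, ← Matrix.mul_assoc, trace_mul_cycle,
    ← adjugate_mul_distrib, hUU, adjugate_one, Matrix.one_mul, adjugate_diagonal,
    trace_diagonal]
  rfl

theorem adjugate_fin_succ_self {R : Type*} [CommRing R] {n : ℕ}
    (A : Matrix (Fin (n + 1)) (Fin (n + 1)) R) (j : Fin (n + 1)) :
    adjugate A j j = det (A.submatrix j.succAbove j.succAbove) := by
  rw [adjugate_fin_succ_eq_det_submatrix, ← two_mul, pow_mul, neg_one_sq, one_pow, one_mul]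

theorem trace_conjTranspose_mul_self {m n : Type*} [Fintype m] [Fintype n] (W : Matrix m n 𝕜) :
    trace (Wᴴ * W) = ∑ j, ∑ i, ((‖W i j‖ ^ 2 : ℝ) : 𝕜) := by
  refine sum_congr rfl fun j _ => ?_
  simp [mul_apply, RCLike.conj_mul]

theorem trace_adjugate_conjTranspose_mul_self {n : ℕ} (W : Matrix (Fin n) (Fin (n + 1)) 𝕜) :
    trace (adjugate (Wᴴ * W)) =
      ∑ j : Fin (n + 1), ((‖det (W.submatrix id j.succAbove)‖ ^ 2 : ℝ) : 𝕜) := by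
  refine sum_congr rfl fun j _ => ?_
  rw [diag_apply, adjugate_fin_succ_self, submatrix_mul _ _ _ id _ Function.bijective_id,
    ← conjTranspose_submatrix, det_mul, det_conjTranspose, RCLike.star_def, RCLike.conj_mul]
  push_cast
  rfl

theorem sum_sq_norm_det_submatrix_succAbove_le {n : ℕ} (W : Matrix (Fin n) (Fin (n + 1)) 𝕜) :
    ∑ j : Fin (n + 1), ‖det (W.submatrix id j.succAbove)‖ ^ 2 ≤
      ((∑ j, ∑ i, ‖W i j‖ ^ 2) / n) ^ n := by
  have hG := isHermitian_conjTranspose_mul_self W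
  have hminors : ∑ j : Fin (n + 1), ‖det (W.submatrix id j.succAbove)‖ ^ 2 =
      ∑ i, ∏ k ∈ univ.erase i, hG.eigenvalues k := by
    exact_mod_cast (trace_adjugate_conjTranspose_mul_self W).symm.trans hG.trace_adjugate
  have htrace : ∑ i, hG.eigenvalues i = ∑ j, ∑ i, ‖W i j‖ ^ 2 := by
    exact_mod_cast hG.trace_eq_sum_eigenvalues.symm.trans (trace_conjTranspose_mul_self W)
  obtain ⟨i₀, hi₀⟩ := hG.exists_eigenvalues_eq_zero_of_rank_lt <| by
    rw [Fintype.card_fin]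
    exact ((rank_mul_le_right _ _).trans (rank_le_height W)).trans_lt n.lt_succ_self
  rw [hminors, ← htrace]
  exact Real.sum_prod_erase_le_of_eq_zero (Fintype.card_fin _)
    (eigenvalues_conjTranspose_mul_self_nonneg W) hi₀

end Matrix

/-- The maximin determinants problem for `n+1` unit vectors in `ℂⁿ`: the minimum,
over all strictly increasing index choices `0 ≤ j₁ < ⋯ < jₙ ≤ n`, of
`|det(w_{j₁}, …, w_{jₙ})|` is at most `√((n+1)^(n-1) / nⁿ)`. -/
theorem stmt0 (n : ℕ) (hn : 1 ≤ n) (w : Fin (n + 1) → EuclideanSpace ℂ (Fin n))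
    (hw : ∀ j, ‖w j‖ = 1) :
    ∃ s : Fin n → Fin (n + 1), StrictMono s ∧
      ‖Matrix.det (Matrix.of fun i a => w (s a) i)‖ ≤
        Real.sqrt (((n : ℝ) + 1) ^ (n - 1) / (n : ℝ) ^ n) := by
  set B : ℝ := ((n : ℝ) + 1) ^ (n - 1) / (n : ℝ) ^ n
  have hbound := sum_sq_norm_det_submatrix_succAbove_le (of fun i j => w j i)
  simp only [of_apply, ← EuclideanSpace.norm_sq_eq, hw, one_pow, sum_const, card_univ,
    Fintype.card_fin, nsmul_eq_mul, mul_one] at hbound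
  push_cast at hbound
  have hmean : (((n : ℝ) + 1) / n) ^ n = ∑ _j : Fin (n + 1), B := by
    obtain ⟨m, rfl⟩ := Nat.exists_eq_add_of_le' hn
    simp only [B, sum_const, card_univ, Fintype.card_fin, nsmul_eq_mul, div_pow,
      Nat.add_sub_cancel, pow_succ]
    push_cast
    field_simp
  obtain ⟨j, -, hj⟩ := exists_le_of_sum_le univ_nonempty (hbound.trans_eq hmean)
  exact ⟨j.succAbove, Fin.strictMono_succAbove j, Real.le_sqrt_of_sq_le hj⟩
end

section
/- Let n ≥ 1 and let w_0, …, w_n be unit vectors in C^n forming the vertex set of a real regular simplex. Then for every index choice 0 ≤ j_1 < … < j_n ≤ n, one has |det(w_{j_1}, …, w_{j_n})| = sqrt((n+1)^(n-1) / n^n); in particular the minimum of these absolute determinants equals sqrt((n+1)^(n-1) / n^n). -/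
/-!
For `j ≠ k` the inner product `⟪w j, w k⟫` is real and, by polarization, equal to
`c = 1 - d² / 2`, so the Gram matrix of any `k` of the vectors is `(1 - c) I + c J`, whose
determinant is `(1 - c)^(k-1) (1 + (k-1) c)`. The `n + 1` vectors are dependent in `ℂⁿ`, so their
Gram matrix is singular, which forces `c = -1/n`. The Gram determinant of `n` of them is then
`(n+1)^(n-1) / nⁿ`, and it equals the squared absolute value of their determinant.
-/

open Matrix

theorem Matrix.det_of_ite_one_const {K : Type*} [Field K] (m : ℕ) {c : K} (hc : c ≠ 1) :
    (of fun i j : Fin (m + 1) => if i = j then 1 else c).det = (1 - c) ^ m * (1 + m * c) := by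
  have hc' : 1 - c ≠ 0 := sub_ne_zero.2 hc.symm
  have hdecomp : (of fun i j : Fin (m + 1) => if i = j then 1 else c) =
      (1 - c) • (1 + vecMulVec (fun _ => c / (1 - c)) 1) := by
    ext i j
    simp only [of_apply, smul_apply, add_apply, one_apply, vecMulVec_apply, Pi.one_apply,
      mul_one, smul_eq_mul]
    split_ifs <;> field_simp <;> ring
  rw [hdecomp, det_smul, vecMulVec_eq Unit, det_one_add_replicateCol_mul_replicateRow]
  simp only [Fintype.card_fin, dotProduct, Pi.one_apply, one_mul, Finset.sum_const,
    Finset.card_univ, nsmul_eq_mul, Nat.cast_add, Nat.cast_one]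
  field_simp
  ring

theorem Matrix.det_of_ite_one_neg_inv {K : Type*} [Field K] [CharZero K] (m : ℕ) :
    (of fun i j : Fin (m + 1) => if i = j then 1 else -1 / (m + 1 : K)).det =
      (m + 2 : K) ^ m / (m + 1) ^ (m + 1) := by
  have hm1 : (m + 1 : K) ≠ 0 := by exact_mod_cast m.succ_ne_zero
  have hm2 : (m + 2 : K) ≠ 0 := by exact_mod_cast (m + 1).succ_ne_zero
  have hc : -1 / (m + 1 : K) ≠ 1 := by
    rw [Ne, div_eq_one_iff_eq hm1]
    exact fun h => hm2 (by linear_combination -h)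
  have h1 : 1 - -1 / (m + 1 : K) = (m + 2) / (m + 1) := by field_simp; ring
  have h2 : 1 + m * (-1 / (m + 1 : K)) = 1 / (m + 1) := by field_simp; ring
  rw [det_of_ite_one_const m hc, h1, h2, div_pow]
  field_simp
  ring

theorem one_add_mul_eq_zero_of_gram_eq {𝕜 E : Type*} [RCLike 𝕜] [NormedAddCommGroup E]
    [InnerProductSpace 𝕜 E] {m : ℕ} {v : Fin (m + 1) → E} (hv : ¬LinearIndependent 𝕜 v)
    {c : 𝕜} (hc : c ≠ 1) (hgram : gram 𝕜 v = of fun i j => if i = j then 1 else c) :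
    1 + m * c = 0 := by
  have hdet : (gram 𝕜 v).det = 0 := not_not.1 (mt det_gram_ne_zero_iff_linearIndependent.1 hv)
  rw [hgram, det_of_ite_one_const m hc] at hdet
  exact (mul_eq_zero.1 hdet).resolve_left (pow_ne_zero _ (sub_ne_zero.2 hc.symm))

theorem EuclideanSpace.det_gram_eq_norm_det_sq {𝕜 ι : Type*} [RCLike 𝕜] [Fintype ι] [DecidableEq ι]
    (v : ι → EuclideanSpace 𝕜 ι) : (gram 𝕜 v).det = (‖(of fun i j => v j i).det‖ ^ 2 : 𝕜) := by
  rw [gram_eq_conjTranspose_mul (EuclideanSpace.basisFun ι 𝕜), det_mul, det_conjTranspose,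
    RCLike.star_def, RCLike.conj_mul]
  simp

theorem EuclideanSpace.im_inner_eq_zero {ι : Type*} [Fintype ι] {x y : EuclideanSpace ℂ ι}
    (hx : ∀ i, (x i).im = 0) (hy : ∀ i, (y i).im = 0) : (inner ℂ x y).im = 0 := by
  simp [PiLp.inner_apply, Complex.im_sum, Complex.mul_im, hx, hy]

theorem inner_eq_one_sub_norm_sub_sq_div_two {𝕜 E : Type*} [RCLike 𝕜] [NormedAddCommGroup E]
    [InnerProductSpace 𝕜 E] {x y : E} (hx : ‖x‖ = 1) (hy : ‖y‖ = 1)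
    (him : RCLike.im (inner 𝕜 x y) = 0) : inner 𝕜 x y = ((1 - ‖x - y‖ ^ 2 / 2 : ℝ) : 𝕜) := by
  refine RCLike.ext ?_ (by rw [RCLike.ofReal_im, him])
  rw [RCLike.ofReal_re, norm_sub_sq (𝕜 := 𝕜), hx, hy]
  ring

theorem EuclideanSpace.gram_eq_of_norm_sub_eq {ι κ : Type*} [Fintype κ] [DecidableEq ι]
    {w : ι → EuclideanSpace ℂ κ} (hw : ∀ j, ‖w j‖ = 1) (hreal : ∀ j i, (w j i).im = 0) {d : ℝ}
    (hd : ∀ j k, j ≠ k → ‖w j - w k‖ = d) :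
    gram ℂ w = of fun j k => if j = k then 1 else ((1 - d ^ 2 / 2 : ℝ) : ℂ) := by
  ext j k
  by_cases hjk : j = k
  · simp [hjk, inner_self_eq_norm_sq_to_K, hw]
  · rw [gram_apply, of_apply, if_neg hjk, inner_eq_one_sub_norm_sub_sq_div_two (hw j) (hw k)
      (im_inner_eq_zero (hreal j) (hreal k)), hd j k hjk]
    -- the coercions `RCLike.ofReal` and `Complex.ofReal` agree only up to unfolding
    rfl

/-- If `w₀, …, wₙ` are unit vectors in `ℂⁿ` forming the vertex set of a real regular
simplex (all coordinates real, the vectors distinct, all pairwise distances equal),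
then every `n × n` determinant of `n` of the vectors has absolute value
`√((n+1)^(n-1) / nⁿ)`. -/
theorem stmt1 (n : ℕ) (hn : 1 ≤ n) (w : Fin (n + 1) → EuclideanSpace ℂ (Fin n))
    (hw : ∀ j, ‖w j‖ = 1)
    (hreal : ∀ j i, (w j i).im = 0)
    (hinj : Function.Injective w)
    (d : ℝ) (hd : ∀ j k, j ≠ k → ‖w j - w k‖ = d) :
    ∀ s : Fin n → Fin (n + 1), StrictMono s →
      ‖Matrix.det (Matrix.of fun i a => w (s a) i)‖ =
        Real.sqrt (((n : ℝ) + 1) ^ (n - 1) / (n : ℝ) ^ n) := by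
  intro s hs
  obtain ⟨m, rfl⟩ : ∃ m, n = m + 1 := ⟨n - 1, by omega⟩
  have hd0 : d ≠ 0 := by
    rw [← hd 0 1 zero_ne_one]
    exact norm_ne_zero_iff.2 (sub_ne_zero.2 (hinj.ne zero_ne_one))
  have hc : ((1 - d ^ 2 / 2 : ℝ) : ℂ) ≠ 1 := fun h => hd0 (by simpa using h)
  have hdep : ¬LinearIndependent ℂ w := fun h => by simpa using h.fintype_card_le_finrank
  have hc_eq : ((1 - d ^ 2 / 2 : ℝ) : ℂ) = -1 / (m + 1) := by
    have := one_add_mul_eq_zero_of_gram_eq hdep hc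
      (EuclideanSpace.gram_eq_of_norm_sub_eq hw hreal hd)
    rw [Nat.cast_succ] at this
    exact eq_div_of_mul_eq (by exact_mod_cast m.succ_ne_zero) (by linear_combination this)
  have hsq := EuclideanSpace.det_gram_eq_norm_det_sq (w ∘ s)
  rw [EuclideanSpace.gram_eq_of_norm_sub_eq (w := w ∘ s) (fun j => hw (s j)) (fun j => hreal (s j))
    (fun j k hjk => hd _ _ (hs.injective.ne hjk)), hc_eq, det_of_ite_one_neg_inv] at hsq
  rw [← Real.sqrt_sq (norm_nonneg _)]
  congr 1
  apply Complex.ofReal_injective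
  push_cast
  simpa [add_assoc, one_add_one_eq_two] using hsq.symm
end

section
/- Let n ≥ 1 and let w_0, …, w_n be n+1 unit vectors in R^n. Then the minimum, over all index choices 0 ≤ j_1 < … < j_n ≤ n, of |det(w_{j_1}, …, w_{j_n})| is at most sqrt((n+1)^(n-1) / n^n). -/
/-!
Let `W` be the `n × (n+1)` matrix with columns `w_j` and `D_j` its maximal minors. The signed
minors `(-1)^j D_j` form a vector orthogonal to the rows of `W`; putting it on top of `W` gives a
square matrix `N` with `det N = ∑ D_j²` and `N Nᵀ = diag(∑ D_j², W Wᵀ)`, so `∑ D_j² ≤ det (W Wᵀ)`.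
The Gram matrix `W Wᵀ` is positive semidefinite with trace `n + 1`, so AM-GM on its eigenvalues
bounds its determinant by `((n+1)/n)^n`, and the smallest `D_j²` is at most the average
`((n+1)/n)^n / (n+1)`.
-/

open Finset Matrix

namespace Matrix

variable {R : Type*} [CommRing R] {n : ℕ}

def maximalMinor (W : Matrix (Fin n) (Fin (n + 1)) R) (j : Fin (n + 1)) : R :=
  (W.submatrix id j.succAbove).det

def generalizedCross (W : Matrix (Fin n) (Fin (n + 1)) R) (j : Fin (n + 1)) : R :=
  (-1) ^ (j : ℕ) * W.maximalMinor j

theorem det_of_vecCons (v : Fin (n + 1) → R) (W : Matrix (Fin n) (Fin (n + 1)) R) :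
    (of (vecCons v W)).det = v ⬝ᵥ W.generalizedCross := by
  rw [det_succ_row_zero, dotProduct]
  refine sum_congr rfl fun j _ => ?_
  change (-1) ^ (j : ℕ) * v j * (W.submatrix id j.succAbove).det =
    v j * ((-1) ^ (j : ℕ) * (W.submatrix id j.succAbove).det)
  ring

theorem mulVec_generalizedCross (W : Matrix (Fin n) (Fin (n + 1)) R) :
    W *ᵥ W.generalizedCross = 0 := by
  ext a
  rw [mulVec, Pi.zero_apply, ← det_of_vecCons]
  exact det_zero_of_row_eq (Fin.succ_ne_zero a).symm rfl

theorem generalizedCross_dotProduct_self (W : Matrix (Fin n) (Fin (n + 1)) R) :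
    W.generalizedCross ⬝ᵥ W.generalizedCross = ∑ j, W.maximalMinor j ^ 2 := by
  refine sum_congr rfl fun j _ => ?_
  have hsign : ((-1 : R) ^ (j : ℕ)) ^ 2 = 1 := by rw [← pow_mul, pow_mul', neg_one_sq, one_pow]
  simp only [generalizedCross]
  linear_combination W.maximalMinor j ^ 2 * hsign

theorem det_of_vecCons_mul_transpose {v : Fin (n + 1) → R} {W : Matrix (Fin n) (Fin (n + 1)) R}
    (hv : W *ᵥ v = 0) :
    (of (vecCons v W) * (of (vecCons v W))ᵀ).det = (v ⬝ᵥ v) * (W * Wᵀ).det := by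
  have hcorner : (of (vecCons v W) * (of (vecCons v W))ᵀ).submatrix Fin.succ Fin.succ =
      W * Wᵀ := rfl
  rw [det_succ_column_zero, Fin.sum_univ_succ, sum_eq_zero]
  · rw [Fin.succAbove_zero, hcorner, Fin.val_zero, pow_zero, one_mul, add_zero]
    rfl
  · intro a _
    have hcol : (of (vecCons v W) * (of (vecCons v W))ᵀ) a.succ 0 = (W *ᵥ v) a := rfl
    rw [hcol, hv, Pi.zero_apply, mul_zero, zero_mul]

theorem sq_sum_sq_maximalMinor (W : Matrix (Fin n) (Fin (n + 1)) R) :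
    (∑ j, W.maximalMinor j ^ 2) ^ 2 = (W * Wᵀ).det * ∑ j, W.maximalMinor j ^ 2 := by
  set N := of (vecCons W.generalizedCross W)
  have hN : N.det = ∑ j, W.maximalMinor j ^ 2 := by
    rw [det_of_vecCons, generalizedCross_dotProduct_self]
  calc (∑ j, W.maximalMinor j ^ 2) ^ 2 = (N * Nᵀ).det := by rw [det_mul, det_transpose, hN, sq]
    _ = (W * Wᵀ).det * ∑ j, W.maximalMinor j ^ 2 := by
      rw [det_of_vecCons_mul_transpose W.mulVec_generalizedCross,
        generalizedCross_dotProduct_self, mul_comm]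

theorem sum_sq_maximalMinor_le_det_mul_transpose (W : Matrix (Fin n) (Fin (n + 1)) ℝ) :
    ∑ j, W.maximalMinor j ^ 2 ≤ (W * Wᵀ).det := by
  rcases (sum_nonneg fun j _ => sq_nonneg (W.maximalMinor j)).eq_or_lt with h0 | hpos
  · rw [← h0]
    simpa using (posSemidef_self_mul_conjTranspose W).det_nonneg
  · exact (mul_right_cancel₀ hpos.ne' ((sq _).symm.trans W.sq_sum_sq_maximalMinor)).le

theorem trace_of_mul_transpose_eq_sum_norm_sq {m ι : Type*} [Fintype m] [Fintype ι]
    (w : ι → EuclideanSpace ℝ m) :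
    (of (fun k i => w i k) * (of fun k i => w i k)ᵀ).trace = ∑ i, ‖w i‖ ^ 2 := by
  simp only [trace, diag, mul_apply, transpose_apply, of_apply, EuclideanSpace.real_norm_sq_eq]
  rw [sum_comm]
  simp only [sq]

end Matrix

theorem Real.prod_le_sum_div_card_pow {ι : Type*} [Fintype ι] (z : ι → ℝ) (hz : ∀ i, 0 ≤ z i) :
    ∏ i, z i ≤ ((∑ i, z i) / Fintype.card ι) ^ Fintype.card ι := by
  rcases (Fintype.card ι).eq_zero_or_pos with hι | hι
  · have := Fintype.card_eq_zero_iff.mp hι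
    simp
  have hprod : 0 ≤ ∏ i, z i := prod_nonneg fun i _ => hz i
  have amgm := Real.geom_mean_le_arith_mean univ (fun _ => 1) z (fun _ _ => zero_le_one)
    (by simpa using hι) (fun i _ => hz i)
  simp only [Real.rpow_one, sum_const, card_univ, nsmul_eq_mul, mul_one, one_mul] at amgm
  calc ∏ i, z i = ((∏ i, z i) ^ ((Fintype.card ι : ℝ)⁻¹)) ^ Fintype.card ι :=
        (Real.rpow_inv_natCast_pow hprod hι.ne').symm
    _ ≤ ((∑ i, z i) / Fintype.card ι) ^ Fintype.card ι := by gcongr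

theorem Matrix.PosSemidef.det_le_trace_div_card_pow {m : Type*} [Fintype m] [DecidableEq m]
    {A : Matrix m m ℝ} (hA : A.PosSemidef) :
    A.det ≤ (A.trace / Fintype.card m) ^ Fintype.card m := by
  rw [hA.1.det_eq_prod_eigenvalues, hA.1.trace_eq_sum_eigenvalues]
  simpa using Real.prod_le_sum_div_card_pow _ hA.eigenvalues_nonneg

theorem stmt2_general (n : ℕ) (w : Fin (n + 1) → EuclideanSpace ℝ (Fin n))
    (hw : ∀ j, ‖w j‖ = 1) :
    ∃ s : Fin n → Fin (n + 1), StrictMono s ∧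
      |Matrix.det (Matrix.of fun i a => w (s a) i)| ≤
        Real.sqrt (((n : ℝ) + 1) ^ (n - 1) / (n : ℝ) ^ n) := by
  set W : Matrix (Fin n) (Fin (n + 1)) ℝ := of fun k i => w i k
  have htrace : (W * Wᵀ).trace = n + 1 := by
    simp [W, trace_of_mul_transpose_eq_sum_norm_sq, hw]
  obtain ⟨j, -, hj⟩ := exists_min_image univ (fun j => W.maximalMinor j ^ 2) univ_nonempty
  have key : (n + 1) * W.maximalMinor j ^ 2 ≤ ((n + 1) / n) ^ n := calc
    (n + 1) * W.maximalMinor j ^ 2 = ∑ _i : Fin (n + 1), W.maximalMinor j ^ 2 := by simp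
    _ ≤ ∑ i, W.maximalMinor i ^ 2 := sum_le_sum fun i _ => hj i (mem_univ i)
    _ ≤ (W * Wᵀ).det := W.sum_sq_maximalMinor_le_det_mul_transpose
    _ ≤ ((n + 1) / n) ^ n := by
      simpa [htrace] using (posSemidef_self_mul_conjTranspose W).det_le_trace_div_card_pow
  have hpow : (((n : ℝ) + 1) / n) ^ n = (n + 1) * ((n + 1) ^ (n - 1) / n ^ n) := by
    rcases n with _ | n
    · simp
    · rw [div_pow, pow_succ' _ n, mul_div_assoc]; rfl
  refine ⟨j.succAbove, Fin.strictMono_succAbove j, ?_⟩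
  rw [← Real.sqrt_sq_eq_abs]
  exact Real.sqrt_le_sqrt (le_of_mul_le_mul_left (hpow ▸ key) (by positivity))

/-- The maximin determinants problem for `n+1` unit vectors in `ℝⁿ`: the minimum,
over all strictly increasing index choices `0 ≤ j₁ < ⋯ < jₙ ≤ n`, of
`|det(w_{j₁}, …, w_{jₙ})|` is at most `√((n+1)^(n-1) / nⁿ)`. -/
theorem stmt2 (n : ℕ) (hn : 1 ≤ n) (w : Fin (n + 1) → EuclideanSpace ℝ (Fin n))
    (hw : ∀ j, ‖w j‖ = 1) :
    ∃ s : Fin n → Fin (n + 1), StrictMono s ∧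
      |Matrix.det (Matrix.of fun i a => w (s a) i)| ≤
        Real.sqrt (((n : ℝ) + 1) ^ (n - 1) / (n : ℝ) ^ n) :=
  stmt2_general n w hw
end

section
/- Let w_0, …, w_n ∈ C^n. Then there exist complex numbers θ_0, …, θ_n and vectors w̃_j = e^{iθ_j} w_j (in particular ‖w̃_j‖ = ‖w_j‖ for each j) together with nonnegative real numbers r_0, …, r_n satisfying r_0 + … + r_n = 1 and r_0 w̃_0 + … + r_n w̃_n = 0; moreover |det(w̃_{j_1}, …, w̃_{j_n})| = |det(w_{j_1}, …, w_{j_n})| for all index choices 0 ≤ j_1 < … < j_n ≤ n. -/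
/-!
Since `n + 1` vectors in `ℂⁿ` are linearly dependent, `∑ cⱼ wⱼ = 0` for some `c ≠ 0`.
Writing `cⱼ = |cⱼ| e^{i arg cⱼ}` and rotating `wⱼ` by `e^{i arg cⱼ}` turns this relation into
one with nonnegative coefficients `|cⱼ|`, which normalise to a convex combination. Each rotation
multiplies a column of a determinant by a unimodular scalar, so no absolute value of a
determinant changes.
-/

open Complex

theorem exists_convex_combination_rotate_arg_smul_eq_zero {ι E : Type*} [Fintype ι]
    [AddCommGroup E] [Module ℂ E] {c : ι → ℂ} (hc : c ≠ 0) {w : ι → E}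
    (hcw : ∑ j, c j • w j = 0) :
    ∃ r : ι → ℝ, (∀ j, 0 ≤ r j) ∧ ∑ j, r j = 1 ∧
      ∑ j, (r j : ℂ) • exp (I * arg (c j)) • w j = 0 := by
  set S : ℝ := ∑ j, ‖c j‖
  have hS : 0 < S := by
    obtain ⟨i, hi⟩ := Function.ne_iff.mp hc
    exact Finset.sum_pos' (fun j _ => norm_nonneg _)
      ⟨i, Finset.mem_univ i, norm_pos_iff.mpr hi⟩
  refine ⟨fun j => ‖c j‖ / S, fun j => by positivity,
    by rw [← Finset.sum_div, div_self hS.ne'], ?_⟩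
  have hrotate : ∀ j,
      ((‖c j‖ / S : ℝ) : ℂ) • exp (I * arg (c j)) • w j = (S : ℂ)⁻¹ • c j • w j := by
    intro j
    rw [smul_smul, smul_smul]
    congr 1
    push_cast
    rw [mul_comm I, div_mul_eq_mul_div, norm_mul_exp_arg_mul_I, div_eq_inv_mul]
  simp only [hrotate, ← Finset.smul_sum, hcw, smul_zero]

theorem Matrix.norm_det_of_mul_col_of_norm_eq_one {m 𝕜 : Type*} [Fintype m] [DecidableEq m]
    [NormedField 𝕜] {u : m → 𝕜} (hu : ∀ a, ‖u a‖ = 1) (M : Matrix m m 𝕜) :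
    ‖det (of fun i a => u a * M i a)‖ = ‖det M‖ := by
  simp [det_mul_row, norm_prod, hu]

/-- Given `w₀, …, wₙ ∈ ℂⁿ`, one can rotate each `wⱼ` by a unimodular factor `e^{iθⱼ}`
(so that norms are preserved) to obtain `w̃ⱼ = e^{iθⱼ} wⱼ`, in such a way that some
convex combination of the `w̃ⱼ` is zero, while all `n × n` determinant absolute values
are unchanged. -/
theorem stmt7 (n : ℕ) (w : Fin (n + 1) → EuclideanSpace ℂ (Fin n)) :
    ∃ θ : Fin (n + 1) → ℂ, ∃ wt : Fin (n + 1) → EuclideanSpace ℂ (Fin n),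
      (∀ j, wt j = Complex.exp (Complex.I * θ j) • w j) ∧
      (∀ j, ‖wt j‖ = ‖w j‖) ∧
      (∃ r : Fin (n + 1) → ℝ,
        (∀ j, 0 ≤ r j) ∧ (∑ j, r j = 1) ∧ (∑ j, (r j : ℂ) • wt j = 0)) ∧
      (∀ s : Fin n → Fin (n + 1), StrictMono s →
        ‖Matrix.det (Matrix.of fun i a => wt (s a) i)‖ =
          ‖Matrix.det (Matrix.of fun i a => w (s a) i)‖) := by
  have hdep : ¬ LinearIndependent ℂ w := fun h => by
    simpa [finrank_euclideanSpace] using h.fintype_card_le_finrank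
  obtain ⟨c, hcw, i, hci⟩ := Fintype.not_linearIndependent_iff.mp hdep
  obtain ⟨r, hr⟩ := exists_convex_combination_rotate_arg_smul_eq_zero
    (Function.ne_iff.mpr ⟨i, hci⟩) hcw
  refine ⟨fun j => (arg (c j) : ℂ), fun j => exp (I * arg (c j)) • w j, fun _ => rfl,
    fun j => by rw [norm_smul, norm_exp_I_mul_ofReal, one_mul], ⟨r, hr⟩, fun s _ => ?_⟩
  simpa only [PiLp.smul_apply, smul_eq_mul, Matrix.of_apply] using
    Matrix.norm_det_of_mul_col_of_norm_eq_one (fun a => norm_exp_I_mul_ofReal (arg (c (s a))))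
      (Matrix.of fun i a => w (s a) i)
end

section
/- Let w_0, …, w_n ∈ C^n have Property A, write w_j = x_j + i y_j with x_j, y_j ∈ R^n, and let u_j = (x_j, y_j) ∈ R^{2n} and v_j = (−y_j, x_j) ∈ R^{2n} be the associated real vectors. Then for any two index choices 0 ≤ j_1 < … < j_n ≤ n and 0 ≤ k_1 < … < k_n ≤ n, one has |det(u_{j_1}, …, u_{j_n}, v_{k_1}, …, v_{k_n})| = |det(w_{j_1}, …, w_{j_n})| · |det(w_{k_1}, …, w_{k_n})|, where the left-hand determinant is of the 2n×2n real matrix with the listed columns and the right-hand determinants are of n×n complex matrices with the listed columns. -/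
/-- The first associated real vector `u = (x₁, …, xₙ, y₁, …, yₙ) ∈ ℝ²ⁿ`
of `w = x + iy ∈ ℂⁿ`. -/
def assocU {n : ℕ} (w : Fin n → ℂ) : Fin n ⊕ Fin n → ℝ :=
  Sum.elim (fun i => (w i).re) (fun i => (w i).im)

/-- The second associated real vector `v = (-y₁, …, -yₙ, x₁, …, xₙ) ∈ ℝ²ⁿ`
of `w = x + iy ∈ ℂⁿ`. -/
def assocV {n : ℕ} (w : Fin n → ℂ) : Fin n ⊕ Fin n → ℝ :=
  Sum.elim (fun i => -(w i).im) (fun i => (w i).re)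

/-- `w₀, …, wₙ ∈ ℂⁿ` have Property A: there are strictly positive reals
`r₀, …, rₙ` with `r₀ + ⋯ + rₙ = 1` and `r₀w₀ + ⋯ + rₙwₙ = 0`. -/
def PropertyA {n : ℕ} (w : Fin (n + 1) → Fin n → ℂ) : Prop :=
  ∃ r : Fin (n + 1) → ℝ, (∀ j, 0 < r j) ∧ (∑ j, r j = 1) ∧
    (∑ j, (r j : ℂ) • w j = 0)

/-! Property A gives a real linear relation among `w₀, …, wₙ` whose coefficient at the index `p`
missed by `s` is nonzero, so every `w j` is a real combination of the `w (s a)` and the matrix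
`B = (w (t b))` factors as `A * C` with `A = (w (s a))` and `C` real. Real scalars commute
with multiplication by `i`, so the `2n × 2n` matrix factors as
`[[Re A, -Im A], [Im A, Re A]] * diag(1, C)`, and the first factor has determinant
`|det A|²` (it is conjugate over `ℂ` to a block triangular matrix with diagonal `A, conj A`).
Hence the absolute determinant is `|det A|² |det C| = |det A| |det B|`. -/

open Matrix Complex

namespace Matrix

variable {l m n : Type*} [Fintype m]

theorem map_re_mul_map_ofReal (A : Matrix l m ℂ) (C : Matrix m n ℝ) :
    (A * C.map ofReal).map re = A.map re * C := by
  ext; simp [mul_apply, re_sum]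

theorem map_im_mul_map_ofReal (A : Matrix l m ℂ) (C : Matrix m n ℝ) :
    (A * C.map ofReal).map im = A.map im * C := by
  ext; simp [mul_apply, im_sum]

variable [DecidableEq m]

theorem det_map_ofReal (C : Matrix m m ℝ) : (C.map ofReal).det = C.det :=
  (RingHom.map_det ofRealHom C).symm

theorem det_fromBlocks_neg_self {R : Type*} [CommRing R] {i : R} (hi : i * i = -1)
    (X Y : Matrix m m R) :
    (fromBlocks X (-Y) Y X).det = (X + i • Y).det * (X - i • Y).det := by
  have hconj : fromBlocks 1 (i • 1) 0 1 * fromBlocks X (-Y) Y X * fromBlocks 1 (-i • 1) 0 1 =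
      fromBlocks (X + i • Y) 0 Y (X - i • Y) := by
    simp only [fromBlocks_multiply, Matrix.mul_smul, Matrix.smul_mul, Matrix.one_mul,
      Matrix.mul_one, Matrix.zero_mul, Matrix.mul_zero, zero_add, add_zero, fromBlocks_inj,
      true_and]
    constructor
    · linear_combination (norm := module) -(hi • Y)
    · module
  simpa [det_fromBlocks_zero₂₁, det_fromBlocks_zero₁₂] using congrArg det hconj

theorem det_fromBlocks_re_im (D : Matrix m m ℂ) :
    (fromBlocks (D.map re) (-D.map im) (D.map im) (D.map re)).det = normSq D.det := by
  have hD : (D.map re).map ofReal + I • (D.map im).map ofReal = D := by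
    ext; simp [Complex.ext_iff]
  have hconj :
      (D.map re).map ofReal - I • (D.map im).map ofReal = (starRingEnd ℂ).mapMatrix D := by
    ext; simp [Complex.ext_iff]
  apply ofReal_injective
  rw [← det_map_ofReal, fromBlocks_map, Matrix.map_neg (hf := ofReal_neg),
    det_fromBlocks_neg_self I_mul_I, hD, hconj, ← RingHom.map_det, mul_conj]

theorem abs_det_fromBlocks_re_im_mul_map_ofReal (A : Matrix m m ℂ) (C : Matrix m m ℝ) :
    |(fromBlocks (A.map re) (-(A * C.map ofReal).map im) (A.map im)
      ((A * C.map ofReal).map re)).det| = ‖A.det‖ * ‖(A * C.map ofReal).det‖ := by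
  have hfac : fromBlocks (A.map re) (-(A * C.map ofReal).map im) (A.map im)
      ((A * C.map ofReal).map re) =
      fromBlocks (A.map re) (-A.map im) (A.map im) (A.map re) * fromBlocks 1 0 0 C := by
    simp [fromBlocks_multiply, map_re_mul_map_ofReal, map_im_mul_map_ofReal]
  rw [hfac, det_mul, det_fromBlocks_re_im, det_fromBlocks_zero₂₁, det_one, one_mul, det_mul,
    det_map_ofReal, abs_mul, abs_of_nonneg (normSq_nonneg _), normSq_eq_norm_sq, norm_mul,
    norm_real, Real.norm_eq_abs]
  ring

end Matrix

theorem StrictMono.exists_eq_succAbove {n : ℕ} {s : Fin n → Fin (n + 1)} (hs : StrictMono s) :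
    ∃ p : Fin (n + 1), s = p.succAbove := by
  obtain ⟨p, hp⟩ : ∃ p, p ∉ Set.range s := by
    by_contra! h
    simpa using Fintype.card_le_of_surjective s h
  refine ⟨p, ?_⟩
  have := Finset.orderEmbOfFin_unique (by simp [Finset.card_compl]) (s := {p}ᶜ)
    (fun a => by simpa using fun h => hp ⟨a, h⟩) hs
  simp only [Finset.orderEmbOfFin_compl_singleton_eq_succAboveOrderEmb] at this
  exact this

theorem Fin.mem_span_range_succAbove_of_sum_smul_eq_zero {K V : Type*} [Field K]
    [AddCommGroup V] [Module K V] {n : ℕ} {w : Fin (n + 1) → V} {r : Fin (n + 1) → K}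
    {p : Fin (n + 1)} (hr : ∑ j, r j • w j = 0) (hp : r p ≠ 0) (j : Fin (n + 1)) :
    w j ∈ Submodule.span K (Set.range fun a => w (p.succAbove a)) := by
  rcases p.eq_self_or_eq_succAbove j with rfl | ⟨a, rfl⟩
  · rw [Fin.sum_univ_succAbove _ j, add_eq_zero_iff_eq_neg] at hr
    rw [← inv_smul_smul₀ hp (w j), hr]
    exact Submodule.smul_mem _ _ <| Submodule.neg_mem _ <| Submodule.sum_mem _ fun a _ =>
      Submodule.smul_mem _ _ <| Submodule.subset_span ⟨a, rfl⟩
  · exact Submodule.subset_span ⟨a, rfl⟩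

theorem of_assocU_assocV_eq_fromBlocks {n : ℕ} (u v : Fin n → Fin n → ℂ) :
    (of fun i c => Sum.elim (fun a => assocU (u a) i) (fun b => assocV (v b) i) c) =
      fromBlocks ((of fun i a => u a i).map re) (-(of fun i b => v b i).map im)
        ((of fun i a => u a i).map im) ((of fun i b => v b i).map re) := by
  ext (i | i) (c | c) <;> rfl

theorem stmt8_general (n : ℕ) (w : Fin (n + 1) → Fin n → ℂ) (hA : PropertyA w)
    (s t : Fin n → Fin (n + 1)) (hs : StrictMono s) :
    |Matrix.det (Matrix.of fun (i c : Fin n ⊕ Fin n) =>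
        Sum.elim (fun a => assocU (w (s a)) i) (fun b => assocV (w (t b)) i) c)| =
      ‖Matrix.det (Matrix.of fun i a => w (s a) i)‖ *
        ‖Matrix.det (Matrix.of fun i a => w (t a) i)‖ := by
  obtain ⟨r, hr_pos, -, hr⟩ := hA
  obtain ⟨p, rfl⟩ := hs.exists_eq_succAbove
  have hr_real : ∑ j, r j • w j = 0 := by simpa using hr
  choose c hc using fun j => (Submodule.mem_span_range_iff_exists_fun ℝ).1 <|
    Fin.mem_span_range_succAbove_of_sum_smul_eq_zero hr_real (hr_pos p).ne' j
  have hB : (of fun i b => w (t b) i) =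
      (of fun i a => w (p.succAbove a) i) * (of fun a b => c (t b) a).map ofReal := by
    ext i b
    simp [mul_apply, ← hc (t b), Finset.sum_apply, mul_comm]
  rw [of_assocU_assocV_eq_fromBlocks, hB]
  exact abs_det_fromBlocks_re_im_mul_map_ofReal _ _

/-- If `w₀, …, wₙ ∈ ℂⁿ` have Property A, then for any two strictly increasing index
choices `j₁ < ⋯ < jₙ` and `k₁ < ⋯ < kₙ`, the absolute value of the `2n × 2n` real
determinant with columns `u_{j₁}, …, u_{jₙ}, v_{k₁}, …, v_{kₙ}` equals the product
`|det(w_{j₁}, …, w_{jₙ})| ⋅ |det(w_{k₁}, …, w_{kₙ})|`. -/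
theorem stmt8 (n : ℕ) (w : Fin (n + 1) → Fin n → ℂ) (hA : PropertyA w)
    (s t : Fin n → Fin (n + 1)) (hs : StrictMono s) (ht : StrictMono t) :
    |Matrix.det (Matrix.of fun (i c : Fin n ⊕ Fin n) =>
        Sum.elim (fun a => assocU (w (s a)) i) (fun b => assocV (w (t b)) i) c)| =
      ‖Matrix.det (Matrix.of fun i a => w (s a) i)‖ *
        ‖Matrix.det (Matrix.of fun i a => w (t a) i)‖ :=
  stmt8_general n w hA s t hs
end

section
/- Let w_0, …, w_n ∈ C^n have Property A and suppose every n-element subset of {w_0, …, w_n} is linearly independent over C. Write w_j = x_j + i y_j and let u_j = (x_j, y_j), v_j = (−y_j, x_j) ∈ R^{2n} be the associated real vectors. Then the 2n-dimensional Lebesgue volume of the convex hull of {u_0, …, u_n, v_0, …, v_n} equals (1/(2n)!) times the sum, over all pairs of index choices 0 ≤ j_1 < … < j_n ≤ n and 0 ≤ k_1 < … < k_n ≤ n, of |det(u_{j_1}, …, u_{j_n}, v_{k_1}, …, v_{k_n})|. -/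
open MeasureTheory Set

def cornerSimplex (ι : Type*) [Fintype ι] (t : ℝ) : Set (ι → ℝ) :=
  {x | 0 ≤ x ∧ ∑ i, x i ≤ t}

lemma isClosed_cornerSimplex (ι : Type*) [Fintype ι] (t : ℝ) : IsClosed (cornerSimplex ι t) :=
  (isClosed_le continuous_const continuous_id).inter
    (isClosed_le (continuous_finsetSum _ fun i _ => continuous_apply i) continuous_const)

lemma isCompact_cornerSimplex (ι : Type*) [Fintype ι] (t : ℝ) : IsCompact (cornerSimplex ι t) :=
  isCompact_Icc.of_isClosed_subset (isClosed_cornerSimplex ι t) fun _ hx =>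
    ⟨hx.1, fun i => (Finset.single_le_sum (fun j _ => hx.1 j) (Finset.mem_univ i)).trans hx.2⟩

lemma cornerSimplex_eq_empty {ι : Type*} [Fintype ι] {t : ℝ} (ht : t < 0) :
    cornerSimplex ι t = ∅ :=
  eq_empty_of_forall_notMem fun _ ⟨hx, hxt⟩ =>
    (Finset.sum_nonneg fun i _ => hx i).not_gt (hxt.trans_lt ht)

lemma lintegral_Icc_ofReal_sub_pow_div_factorial (m : ℕ) {t : ℝ} (ht : 0 ≤ t) :
    ∫⁻ s in Icc 0 t, ENNReal.ofReal ((t - s) ^ m / m.factorial) =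
      ENNReal.ofReal (t ^ (m + 1) / (m + 1).factorial) := by
  rw [← ofReal_integral_eq_lintegral_ofReal]
  · rw [integral_Icc_eq_integral_Ioc, ← intervalIntegral.integral_of_le ht,
      intervalIntegral.integral_div, intervalIntegral.integral_comp_sub_left (· ^ m),
      integral_pow, Nat.factorial_succ]
    simp [div_div, mul_comm]
  · exact (by fun_prop : Continuous fun s : ℝ => (t - s) ^ m / m.factorial).integrableOn_Icc
  · filter_upwards [ae_restrict_mem measurableSet_Icc] with s hs
    have := sub_nonneg.2 hs.2
    positivity

lemma volume_cornerSimplex_fin (m : ℕ) {t : ℝ} (ht : 0 ≤ t) :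
    volume (cornerSimplex (Fin m) t) = ENNReal.ofReal (t ^ m / m.factorial) := by
  induction m generalizing t with
  | zero =>
    have : cornerSimplex (Fin 0) t = univ := by
      ext x; simp [cornerSimplex, Subsingleton.elim x 0, ht]
    simp [this, volume_pi]
  | succ m ih =>
    set B : Set (ℝ × (Fin m → ℝ)) := {p | 0 ≤ p.1 ∧ p.2 ∈ cornerSimplex (Fin m) (t - p.1)}
    have hB : MeasurableSet B :=
      (measurableSet_le measurable_const measurable_fst).inter
        ((measurableSet_le measurable_const measurable_snd).inter
          (measurableSet_le (by fun_prop : Measurable fun p : ℝ × (Fin m → ℝ) => ∑ i, p.2 i)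
            (by fun_prop : Measurable fun p : ℝ × (Fin m → ℝ) => t - p.1)))
    have hpre : cornerSimplex (Fin (m + 1)) t =
        MeasurableEquiv.piFinSuccAbove (fun _ => ℝ) 0 ⁻¹' B := by
      ext x
      simp only [B, cornerSimplex, mem_preimage, mem_ofPred_eq,
        MeasurableEquiv.piFinSuccAbove_apply, Fin.insertNthEquiv_zero, Fin.consEquiv_symm_apply,
        Pi.le_def, Fin.forall_fin_succ, Fin.sum_univ_succ, le_sub_iff_add_le', Pi.zero_apply,
        Fin.tail, and_assoc]
    have hslice (s : ℝ) : volume (Prod.mk s ⁻¹' B) =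
        (Icc 0 t).indicator (fun s => ENNReal.ofReal ((t - s) ^ m / m.factorial)) s := by
      by_cases hs : s ∈ Icc 0 t
      · rw [indicator_of_mem hs, ← ih (sub_nonneg.2 hs.2)]
        congr 1
        ext y
        simp [B, hs.1]
      · rw [indicator_of_notMem hs, ← measure_empty (μ := (volume : Measure (Fin m → ℝ)))]
        congr 1
        rw [mem_Icc, not_and_or, not_le, not_le] at hs
        rcases hs with hs | hs
        · exact eq_empty_of_forall_notMem fun y hy => hs.not_ge hy.1
        · simp [B, cornerSimplex_eq_empty (sub_neg.2 hs)]
    rw [hpre, ((volume_preserving_piFinSuccAbove (fun _ => ℝ) 0).measure_preimage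
      hB.nullMeasurableSet), Measure.volume_eq_prod, Measure.prod_apply hB]
    simp_rw [hslice]
    rw [lintegral_indicator measurableSet_Icc, lintegral_Icc_ofReal_sub_pow_div_factorial m ht]

lemma volume_cornerSimplex (ι : Type*) [Fintype ι] {t : ℝ} (ht : 0 ≤ t) :
    volume (cornerSimplex ι t) =
      ENNReal.ofReal (t ^ Fintype.card ι / (Fintype.card ι).factorial) := by
  set e : Fin (Fintype.card ι) ≃ ι := (Fintype.equivFin ι).symm
  have hpre : MeasurableEquiv.piCongrLeft (fun _ => ℝ) e ⁻¹' cornerSimplex ι t =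
      cornerSimplex (Fin (Fintype.card ι)) t := by
    ext x
    simp only [cornerSimplex, mem_preimage, mem_ofPred_eq, Pi.le_def, Pi.zero_apply,
      e.forall_congr_left, ← e.sum_comp, MeasurableEquiv.coe_piCongrLeft,
      Equiv.piCongrLeft_apply_eq_cast, cast_eq, Equiv.symm_apply_apply]
  rw [← volume_cornerSimplex_fin _ ht, ← hpre,
    (volume_measurePreserving_piCongrLeft (fun _ => ℝ) e).measure_preimage
      (isClosed_cornerSimplex ι t).measurableSet.nullMeasurableSet]

lemma volume_image_cornerSimplex {ι : Type*} [Fintype ι] [DecidableEq ι] (g : ι → ι → ℝ) :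
    volume (Fintype.linearCombination ℝ g '' cornerSimplex ι 1) =
      ENNReal.ofReal (|(Matrix.of fun i c => g c i).det| / (Fintype.card ι).factorial) := by
  have hdet : LinearMap.det (Fintype.linearCombination ℝ g) = (Matrix.of fun i c => g c i).det := by
    rw [← LinearMap.det_toMatrix']
    congr 1
    ext i c
    simp [LinearMap.toMatrix'_apply, Fintype.linearCombination_apply_single]
  rw [Measure.addHaar_image_linearMap, hdet, volume_cornerSimplex ι zero_le_one,
    ← ENNReal.ofReal_mul (abs_nonneg _), one_pow, mul_one_div]

lemma convexHull_range_eq_image_stdSimplex {ι E : Type*} [Fintype ι] [AddCommGroup E]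
    [Module ℝ E] (v : ι → E) :
    convexHull ℝ (range v) = Fintype.linearCombination ℝ v '' stdSimplex ℝ ι := by
  classical
  rw [← convexHull_basis_eq_stdSimplex, LinearMap.image_convexHull, ← range_comp]
  congr 2
  ext i
  simp [Fintype.linearCombination_apply, ite_smul]

lemma exists_zero_coeff_sum_smul_eq {ι M : Type*} [Fintype ι] [Nonempty ι] [AddCommGroup M]
    [Module ℝ M] {r : ι → ℝ} (hr : ∀ j, 0 < r j) {U : ι → M} (hU : ∑ j, r j • U j = 0)
    {s : ι → ℝ} (hs : 0 ≤ s) :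
    ∃ (ℓ : ι) (a : ι → ℝ), 0 ≤ a ∧ a ℓ = 0 ∧ ∑ j, a j ≤ ∑ j, s j ∧
      ∑ j, a j • U j = ∑ j, s j • U j := by
  obtain ⟨ℓ, -, hmin⟩ := Finset.univ.exists_min_image (fun j => s j / r j) Finset.univ_nonempty
  set c := s ℓ / r ℓ
  refine ⟨ℓ, s - c • r, fun j => ?_, ?_, ?_, ?_⟩
  · simpa using (le_div_iff₀ (hr j)).1 (hmin j (Finset.mem_univ j))
  · simp [c, div_mul_cancel₀ _ (hr ℓ).ne']
  · have : 0 ≤ c * ∑ j, r j :=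
      mul_nonneg (div_nonneg (hs ℓ) (hr ℓ).le) (Finset.sum_nonneg fun j _ => (hr j).le)
    simpa [Finset.sum_sub_distrib, ← Finset.mul_sum] using this
  · simp [sub_smul, Finset.sum_sub_distrib, mul_smul, ← Finset.smul_sum, hU]

lemma Fin.sum_eq_sum_succAbove_of_eq_zero {n : ℕ} {A : Type*} [AddCommMonoid A]
    {f : Fin (n + 1) → A} {ℓ : Fin (n + 1)} (hf : f ℓ = 0) : ∑ j, f j = ∑ m, f (ℓ.succAbove m) := by
  rw [Fin.sum_univ_succAbove f ℓ, hf, zero_add]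

section Pieces

variable {M : Type*} [AddCommGroup M] [Module ℝ M] {n : ℕ}

/-- The simplex `conv (0, U j (j ≠ ℓ), V j (j ≠ k))`. -/
def simplexPiece (U V : Fin (n + 1) → M) (ℓ k : Fin (n + 1)) : Set M :=
  Fintype.linearCombination ℝ (Sum.elim (U ∘ ℓ.succAbove) (V ∘ k.succAbove)) ''
    cornerSimplex (Fin n ⊕ Fin n) 1

lemma mem_simplexPiece_iff {U V : Fin (n + 1) → M} {ℓ k : Fin (n + 1)} {p : M} :
    p ∈ simplexPiece U V ℓ k ↔ ∃ a b : Fin (n + 1) → ℝ, 0 ≤ a ∧ 0 ≤ b ∧ a ℓ = 0 ∧ b k = 0 ∧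
      ∑ j, a j + ∑ j, b j ≤ 1 ∧ ∑ j, a j • U j + ∑ j, b j • V j = p := by
  have key {a b : Fin (n + 1) → ℝ} (haℓ : a ℓ = 0) (hbk : b k = 0) :
      ∑ i, Sum.elim (a ∘ ℓ.succAbove) (b ∘ k.succAbove) i = ∑ j, a j + ∑ j, b j ∧
      Fintype.linearCombination ℝ (Sum.elim (U ∘ ℓ.succAbove) (V ∘ k.succAbove))
        (Sum.elim (a ∘ ℓ.succAbove) (b ∘ k.succAbove)) = ∑ j, a j • U j + ∑ j, b j • V j := by
    rw [Fin.sum_eq_sum_succAbove_of_eq_zero haℓ, Fin.sum_eq_sum_succAbove_of_eq_zero hbk,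
      Fin.sum_eq_sum_succAbove_of_eq_zero (f := fun j => a j • U j) (ℓ := ℓ) (by simp [haℓ]),
      Fin.sum_eq_sum_succAbove_of_eq_zero (f := fun j => b j • V j) (ℓ := k) (by simp [hbk])]
    simp [Fintype.sum_sum_type, Fintype.linearCombination_apply]
  constructor
  · rintro ⟨x, ⟨hx0, hx1⟩, rfl⟩
    obtain ⟨a, haℓ, ha⟩ : ∃ a : Fin (n + 1) → ℝ, a ℓ = 0 ∧ a ∘ ℓ.succAbove = x ∘ Sum.inl :=
      ⟨ℓ.insertNth 0 (x ∘ Sum.inl), by simp, by ext; simp⟩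
    obtain ⟨b, hbk, hb⟩ : ∃ b : Fin (n + 1) → ℝ, b k = 0 ∧ b ∘ k.succAbove = x ∘ Sum.inr :=
      ⟨k.insertNth 0 (x ∘ Sum.inr), by simp, by ext; simp⟩
    have hx : x = Sum.elim (a ∘ ℓ.succAbove) (b ∘ k.succAbove) := by
      rw [ha, hb, Sum.elim_comp_inl_inr]
    subst hx
    refine ⟨a, b, ?_, ?_, haℓ, hbk, (key haℓ hbk).1 ▸ hx1, (key haℓ hbk).2.symm⟩
    · exact (Fin.forall_iff_succAbove ℓ).2 ⟨haℓ.ge, fun m => hx0 (Sum.inl m)⟩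
    · exact (Fin.forall_iff_succAbove k).2 ⟨hbk.ge, fun m => hx0 (Sum.inr m)⟩
  · rintro ⟨a, b, ha, hb, haℓ, hbk, hab, rfl⟩
    refine ⟨Sum.elim (a ∘ ℓ.succAbove) (b ∘ k.succAbove), ⟨?_, (key haℓ hbk).1 ▸ hab⟩,
      (key haℓ hbk).2⟩
    rintro (m | m)
    exacts [ha _, hb _]

lemma simplexPiece_comm (U V : Fin (n + 1) → M) (ℓ k : Fin (n + 1)) :
    simplexPiece V U k ℓ = simplexPiece U V ℓ k := by
  ext p
  simp only [mem_simplexPiece_iff]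
  constructor <;>
  · rintro ⟨a, b, ha, hb, haℓ, hbk, hab, rfl⟩
    exact ⟨b, a, hb, ha, hbk, haℓ, by linarith, add_comm _ _⟩

theorem convexHull_range_union_eq_iUnion_simplexPiece {r : Fin (n + 1) → ℝ}
    (hr : ∀ j, 0 < r j) (hr1 : ∑ j, r j = 1) {U V : Fin (n + 1) → M}
    (hU : ∑ j, r j • U j = 0) (hV : ∑ j, r j • V j = 0) :
    convexHull ℝ (range U ∪ range V) = ⋃ ℓ, ⋃ k, simplexPiece U V ℓ k := by
  apply Subset.antisymm
  · rw [← Sum.elim_range, convexHull_range_eq_image_stdSimplex]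
    rintro _ ⟨z, ⟨hz0, hz1⟩, rfl⟩
    obtain ⟨ℓ, a, ha, haℓ, hsa, hUa⟩ :=
      exists_zero_coeff_sum_smul_eq hr hU (s := z ∘ Sum.inl) fun j => hz0 _
    obtain ⟨k, b, hb, hbk, hsb, hVb⟩ :=
      exists_zero_coeff_sum_smul_eq hr hV (s := z ∘ Sum.inr) fun j => hz0 _
    rw [Fintype.sum_sum_type] at hz1
    refine mem_iUnion₂.2 ⟨ℓ, k, mem_simplexPiece_iff.2
      ⟨a, b, ha, hb, haℓ, hbk, by simp only [Function.comp_apply] at hsa hsb; linarith, ?_⟩⟩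
    simp [hUa, hVb, Fintype.linearCombination_apply, Fintype.sum_sum_type]
  · refine iUnion₂_subset fun ℓ k => ?_
    rintro _ hp
    obtain ⟨a, b, ha, hb, -, -, hab, rfl⟩ := mem_simplexPiece_iff.1 hp
    set c := 1 - (∑ j, a j + ∑ j, b j)
    refine mem_convexHull_of_exists_fintype (Sum.elim (a + c • r) b) (Sum.elim U V) ?_ ?_ ?_ ?_
    · rintro (j | j)
      · exact add_nonneg (ha j) (mul_nonneg (sub_nonneg.2 hab) (hr j).le)
      · exact hb j
    · simp [Fintype.sum_sum_type, Finset.sum_add_distrib, ← Finset.mul_sum, hr1, c]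
      ring
    · rintro (j | j)
      exacts [Or.inl ⟨j, rfl⟩, Or.inr ⟨j, rfl⟩]
    · simp [Fintype.sum_sum_type, add_smul, Finset.sum_add_distrib, mul_smul, ← Finset.smul_sum, hU]

def RelationsSpannedBy (r : Fin (n + 1) → ℝ) (U V : Fin (n + 1) → M) : Prop :=
  ∀ a b : Fin (n + 1) → ℝ, ∑ j, a j • U j + ∑ j, b j • V j = 0 → ∃ α β : ℝ, a = α • r ∧ b = β • r

lemma RelationsSpannedBy.symm {r : Fin (n + 1) → ℝ} {U V : Fin (n + 1) → M}
    (h : RelationsSpannedBy r U V) : RelationsSpannedBy r V U := fun a b hab =>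
  let ⟨α, β, ha, hb⟩ := h b a (by rwa [add_comm])
  ⟨β, α, hb, ha⟩

lemma simplexPiece_inter_subset_span {r : Fin (n + 1) → ℝ} (hr : ∀ j, 0 < r j)
    {U V : Fin (n + 1) → M} (hUV : RelationsSpannedBy r U V) {ℓ ℓ' : Fin (n + 1)} (hℓ : ℓ ≠ ℓ')
    (k k' : Fin (n + 1)) :
    simplexPiece U V ℓ k ∩ simplexPiece U V ℓ' k' ⊆
      (Submodule.span ℝ (U '' {ℓ, ℓ'}ᶜ) ⊔
        Submodule.span ℝ (range V) : Submodule ℝ M) := by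
  rintro _ ⟨hp, hp'⟩
  obtain ⟨a, b, ha, -, haℓ, -, -, rfl⟩ := mem_simplexPiece_iff.1 hp
  obtain ⟨a', b', ha', -, haℓ', -, -, hp'⟩ := mem_simplexPiece_iff.1 hp'
  obtain ⟨α, -, hα, -⟩ := hUV (a - a') (b - b') (by
    simp only [Pi.sub_apply, sub_smul, Finset.sum_sub_distrib]
    rw [sub_add_sub_comm, hp', sub_self])
  have hαℓ := congrFun hα ℓ
  have hαℓ' := congrFun hα ℓ'
  simp only [Pi.sub_apply, Pi.smul_apply, smul_eq_mul, haℓ, haℓ'] at hαℓ hαℓ'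
  -- `a - a' = α • r` is `≤ 0` at `ℓ` and `≥ 0` at `ℓ'`
  have hα0 : α = 0 := le_antisymm
    (nonpos_of_mul_nonpos_left (by linarith [show 0 ≤ a' ℓ from ha' ℓ]) (hr ℓ))
    (nonneg_of_mul_nonneg_left (by linarith [show 0 ≤ a ℓ' from ha ℓ']) (hr ℓ'))
  have haℓ'0 : a ℓ' = 0 := by simpa [hα0] using hαℓ'
  refine Submodule.add_mem _ (Submodule.mem_sup_left (Submodule.sum_mem _ fun j _ => ?_))
    (Submodule.mem_sup_right (Submodule.sum_mem _ fun j _ =>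
      Submodule.smul_mem _ _ (Submodule.subset_span (mem_range_self j))))
  by_cases hj : j = ℓ ∨ j = ℓ'
  · rcases hj with rfl | rfl <;> simp [haℓ, haℓ'0]
  · exact Submodule.smul_mem _ _ (Submodule.subset_span ⟨j, hj, rfl⟩)

end Pieces

lemma finrank_span_range_le_of_sum_smul_eq_zero {K M : Type*} [Field K] [AddCommGroup M]
    [Module K M] {n : ℕ} {r : Fin (n + 1) → K} {V : Fin (n + 1) → M}
    (hV : ∑ j, r j • V j = 0) {ℓ : Fin (n + 1)} (hℓ : r ℓ ≠ 0) :
    Module.finrank K (Submodule.span K (range V)) ≤ n := by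
  have hspan : Submodule.span K (range V) ≤ Submodule.span K (range (V ∘ ℓ.succAbove)) := by
    refine Submodule.span_le.2 (range_subset_iff.2 fun j => ?_)
    obtain hj | ⟨m, rfl⟩ := ℓ.eq_self_or_eq_succAbove j
    · rw [hj]
      rw [Fin.sum_univ_succAbove _ ℓ, ← eq_neg_iff_add_eq_zero] at hV
      exact (Submodule.smul_mem_iff _ hℓ).1 (hV ▸ Submodule.neg_mem _ (Submodule.sum_mem _
        fun m _ => Submodule.smul_mem _ _ (Submodule.subset_span (mem_range_self m))))
    · exact Submodule.subset_span (mem_range_self m)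
  have := FiniteDimensional.span_of_finite K (finite_range (V ∘ ℓ.succAbove))
  exact (Submodule.finrank_mono hspan).trans ((finrank_range_le_card _).trans (by simp))

lemma isCompact_simplexPiece {E : Type*} [NormedAddCommGroup E] [NormedSpace ℝ E]
    [FiniteDimensional ℝ E] {n : ℕ} (U V : Fin (n + 1) → E) (ℓ k : Fin (n + 1)) :
    IsCompact (simplexPiece U V ℓ k) :=
  (isCompact_cornerSimplex _ 1).image (LinearMap.continuous_of_finiteDimensional _)

section Measure

variable {E : Type*} [NormedAddCommGroup E] [NormedSpace ℝ E] [MeasurableSpace E] [BorelSpace E]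
  [FiniteDimensional ℝ E] (μ : Measure E) [μ.IsAddHaarMeasure] {n : ℕ}

lemma measure_simplexPiece_inter_eq_zero_of_ne_left (hE : Module.finrank ℝ E = 2 * n)
    {r : Fin (n + 1) → ℝ} (hr : ∀ j, 0 < r j) {U V : Fin (n + 1) → E}
    (hUV : RelationsSpannedBy r U V) (hV : ∑ j, r j • V j = 0) {ℓ ℓ' : Fin (n + 1)}
    (hℓ : ℓ ≠ ℓ') (k k' : Fin (n + 1)) :
    μ (simplexPiece U V ℓ k ∩ simplexPiece U V ℓ' k') = 0 := by
  classical
  refine measure_mono_null (simplexPiece_inter_subset_span hr hUV hℓ k k')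
    (Measure.addHaar_submodule μ _ fun htop => ?_)
  have hU : Module.finrank ℝ (Submodule.span ℝ (U '' {ℓ, ℓ'}ᶜ)) ≤ n + 1 - 2 := by
    have hcoe : U '' {ℓ, ℓ'}ᶜ = ↑(({ℓ, ℓ'} : Finset (Fin (n + 1)))ᶜ.image U) := by
      rw [Finset.coe_image, Finset.coe_compl, Finset.coe_pair]
    have hcard : (({ℓ, ℓ'} : Finset (Fin (n + 1)))ᶜ).card = n + 1 - 2 := by
      rw [Finset.card_compl, Finset.card_pair hℓ, Fintype.card_fin]
    rw [hcoe, ← hcard]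
    exact (finrank_span_finset_le_card _).trans Finset.card_image_le
  have := (Submodule.finrank_add_le_finrank_add_finrank _ _).trans
    (add_le_add hU (finrank_span_range_le_of_sum_smul_eq_zero hV (hr 0).ne'))
  rw [htop, finrank_top, hE] at this
  have : 2 ≤ n + 1 := by simpa [Finset.card_pair hℓ] using Finset.card_le_univ {ℓ, ℓ'}
  omega

theorem measure_iUnion_simplexPiece (hE : Module.finrank ℝ E = 2 * n) {r : Fin (n + 1) → ℝ}
    (hr : ∀ j, 0 < r j) {U V : Fin (n + 1) → E} (hUV : RelationsSpannedBy r U V)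
    (hU : ∑ j, r j • U j = 0) (hV : ∑ j, r j • V j = 0) :
    μ (⋃ ℓ, ⋃ k, simplexPiece U V ℓ k) = ∑ ℓ, ∑ k, μ (simplexPiece U V ℓ k) := by
  rw [← iUnion_prod' fun p => simplexPiece U V p.1 p.2, measure_iUnion₀, tsum_fintype,
    Fintype.sum_prod_type]
  · rintro ⟨ℓ, k⟩ ⟨ℓ', k'⟩ hne
    by_cases hℓ : ℓ = ℓ'
    · subst hℓ
      have hk : k ≠ k' := fun hk => hne (by rw [hk])
      rw [Function.onFun, AEDisjoint, ← simplexPiece_comm, ← simplexPiece_comm U]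
      exact measure_simplexPiece_inter_eq_zero_of_ne_left μ hE hr hUV.symm hU hk ℓ ℓ
    · exact measure_simplexPiece_inter_eq_zero_of_ne_left μ hE hr hUV hV hℓ k k'
  · exact fun p => (isCompact_simplexPiece U V p.1 p.2).isClosed.measurableSet.nullMeasurableSet

end Measure

lemma exists_eq_smul_of_sum_smul_eq_zero {K E : Type*} [Field K] [AddCommGroup E] [Module K E]
    {n : ℕ} {w : Fin (n + 1) → E} (hw : LinearIndependent K (w ∘ Fin.succ))
    {r : Fin (n + 1) → K} (hr : ∑ j, r j • w j = 0) (hr0 : r 0 ≠ 0)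
    {c : Fin (n + 1) → K} (hc : ∑ j, c j • w j = 0) : ∃ α : K, c = α • r := by
  refine ⟨c 0 / r 0, ?_⟩
  set d := c - (c 0 / r 0) • r
  have hd0 : d 0 = 0 := by simp [d, div_mul_cancel₀ _ hr0]
  have hd : ∑ j, d j • w j = 0 := by
    simp [d, sub_smul, Finset.sum_sub_distrib, mul_smul, ← Finset.smul_sum, hc, hr]
  have hdsucc : d ∘ Fin.succ = 0 := by
    refine funext (Fintype.linearIndependent_iff.1 hw _ ?_)
    simpa [Fin.sum_univ_succ, hd0] using hd
  have : d = 0 := funext (Fin.cases hd0 (congrFun hdsucc))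
  exact sub_eq_zero.1 this

lemma assocU_sum_smul {ι : Type*} [Fintype ι] {n : ℕ} (c : ι → ℂ) (w : ι → Fin n → ℂ) :
    assocU (∑ j, c j • w j) = ∑ j, (c j).re • assocU (w j) + ∑ j, (c j).im • assocV (w j) := by
  ext (i | i) <;>
  simp [assocU, assocV, Finset.sum_apply, Complex.re_sum, Complex.im_sum, Finset.sum_add_distrib,
    sub_eq_add_neg]

@[simp]
lemma assocU_zero {n : ℕ} : assocU (0 : Fin n → ℂ) = 0 := by
  ext (i | i) <;> simp [assocU]

lemma assocU_injective {n : ℕ} : Function.Injective (assocU : (Fin n → ℂ) → Fin n ⊕ Fin n → ℝ) :=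
  fun _ _ h => funext fun i => Complex.ext (congrFun h (Sum.inl i)) (congrFun h (Sum.inr i))

lemma sum_smul_assocU_eq_zero {n : ℕ} {w : Fin (n + 1) → Fin n → ℂ} {r : Fin (n + 1) → ℝ}
    (hw : ∑ j, (r j : ℂ) • w j = 0) : ∑ j, r j • assocU (w j) = 0 := by
  have h := assocU_sum_smul (fun j => (r j : ℂ)) w
  simpa only [hw, assocU_zero, Complex.ofReal_re, Complex.ofReal_im, zero_smul,
    Finset.sum_const_zero, add_zero] using h.symm

lemma sum_smul_assocV_eq_zero {n : ℕ} {w : Fin (n + 1) → Fin n → ℂ} {r : Fin (n + 1) → ℝ}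
    (hw : ∑ j, (r j : ℂ) • w j = 0) : ∑ j, r j • assocV (w j) = 0 := by
  have hIw : ∑ j, ((r j : ℂ) * Complex.I) • w j = 0 := by
    simp only [mul_comm _ Complex.I, mul_smul, ← Finset.smul_sum, hw, smul_zero]
  have h := assocU_sum_smul (fun j => (r j : ℂ) * Complex.I) w
  simpa only [hIw, assocU_zero, Complex.re_ofReal_mul, Complex.im_ofReal_mul, Complex.I_re,
    Complex.I_im, mul_zero, mul_one, zero_smul, Finset.sum_const_zero, zero_add] using h.symm

lemma relationsSpannedBy_assoc {n : ℕ} {w : Fin (n + 1) → Fin n → ℂ} {r : Fin (n + 1) → ℝ}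
    (hr0 : r 0 ≠ 0) (hw : ∑ j, (r j : ℂ) • w j = 0) (hind : LinearIndependent ℂ (w ∘ Fin.succ)) :
    RelationsSpannedBy r (fun j => assocU (w j)) (fun j => assocV (w j)) := by
  intro a b hab
  obtain ⟨α, hα⟩ := exists_eq_smul_of_sum_smul_eq_zero hind hw (by exact_mod_cast hr0)
    (c := fun j => ⟨a j, b j⟩) (assocU_injective (by rw [assocU_sum_smul, assocU_zero]; exact hab))
  refine ⟨α.re, α.im, funext fun j => ?_, funext fun j => ?_⟩
  · simpa using congrArg Complex.re (congrFun hα j)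
  · simpa using congrArg Complex.im (congrFun hα j)

lemma volume_simplexPiece {n : ℕ} (U V : Fin (n + 1) → Fin n ⊕ Fin n → ℝ) (ℓ k : Fin (n + 1)) :
    volume (simplexPiece U V ℓ k) = ENNReal.ofReal ((1 / ((2 * n).factorial : ℝ)) *
      |Matrix.det (Matrix.of fun (i c : Fin n ⊕ Fin n) =>
        Sum.elim (fun a => U (ℓ.succAbove a) i) (fun b => V (k.succAbove b) i) c)|) := by
  classical
  rw [simplexPiece, volume_image_cornerSimplex, Fintype.card_sum, Fintype.card_fin, ← two_mul,
    one_div_mul_eq_div]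
  congr 4
  ext i (c | c) <;> rfl

/-- If `w₀, …, wₙ ∈ ℂⁿ` have Property A and every `n` of them are linearly independent
over `ℂ`, then the `2n`-dimensional Lebesgue volume of the convex hull of the associated
real vectors `u₀, …, uₙ, v₀, …, vₙ` equals `1/(2n)!` times the sum, over all pairs of
strictly increasing index choices (equivalently, over the pairs `(ℓ, k)` of omitted
indices, via `Fin.succAbove`), of the `2n × 2n` determinant absolute values. -/
theorem stmt9 (n : ℕ) (w : Fin (n + 1) → Fin n → ℂ) (hA : PropertyA w)
    (hind : ∀ s : Fin n → Fin (n + 1), StrictMono s →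
      LinearIndependent ℂ (fun a => w (s a))) :
    MeasureTheory.volume
      (convexHull ℝ
        (((Set.range fun j => assocU (w j)) ∪ (Set.range fun j => assocV (w j)))
          : Set (Fin n ⊕ Fin n → ℝ))) =
    ENNReal.ofReal ((1 / ((2 * n).factorial : ℝ)) *
      ∑ ℓ : Fin (n + 1), ∑ k : Fin (n + 1),
        |Matrix.det (Matrix.of fun (i c : Fin n ⊕ Fin n) =>
          Sum.elim (fun a => assocU (w (ℓ.succAbove a)) i)
            (fun b => assocV (w (k.succAbove b)) i) c)|) := by
  obtain ⟨r, hr, hr1, hw⟩ := hA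
  have hU := sum_smul_assocU_eq_zero hw
  have hV := sum_smul_assocV_eq_zero hw
  have hUV := relationsSpannedBy_assoc (hr 0).ne' hw (hind Fin.succ (Fin.strictMono_succ))
  rw [convexHull_range_union_eq_iUnion_simplexPiece hr hr1 hU hV,
    measure_iUnion_simplexPiece volume (by simp [two_mul]) hr hUV hU hV]
  simp only [volume_simplexPiece, Finset.mul_sum]
  rw [ENNReal.ofReal_sum_of_nonneg fun ℓ _ => Finset.sum_nonneg fun k _ => by positivity]
  refine Finset.sum_congr rfl fun ℓ _ => ?_
  rw [ENNReal.ofReal_sum_of_nonneg fun k _ => by positivity]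
end

section
/- Let w_0, …, w_n ∈ C^n have Property A. Write w_j = x_j + i y_j and let u_j = (x_j, y_j), v_j = (−y_j, x_j) ∈ R^{2n} be the associated real vectors. Then the convex hull of {u_0, …, u_n, v_0, …, v_n} equals the union, over all pairs (ℓ, k) with 0 ≤ ℓ, k ≤ n, of the convex hulls of the sets {0} ∪ {u_j : j ≠ ℓ} ∪ {v_j : j ≠ k}. -/
/-- If `w₀, …, wₙ ∈ ℂⁿ` have Property A, then the convex hull of the associated real
vectors `u₀, …, uₙ, v₀, …, vₙ` in `ℝ²ⁿ` is the union, over all pairs `(ℓ, k)`, of the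
convex hulls of `{0} ∪ {uⱼ : j ≠ ℓ} ∪ {vⱼ : j ≠ k}`. -/
theorem stmt10 (n : ℕ) (w : Fin (n + 1) → Fin n → ℂ) (hA : PropertyA w) :
    convexHull ℝ
      (((Set.range fun j => assocU (w j)) ∪ (Set.range fun j => assocV (w j)))
        : Set (Fin n ⊕ Fin n → ℝ)) =
    ⋃ ℓ : Fin (n + 1), ⋃ k : Fin (n + 1),
      convexHull ℝ
        (({0} ∪ ((fun j => assocU (w j)) '' {ℓ}ᶜ) ∪ ((fun j => assocV (w j)) '' {k}ᶜ))
          : Set (Fin n ⊕ Fin n → ℝ)) := by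
  classical
  obtain ⟨r, hr, hr1, hrw⟩ := hA
  have hcoord : ∀ i, ∑ j, (r j : ℂ) * w j i = 0 := by
    intro i
    have h := congrFun hrw i
    simpa [Finset.sum_apply] using h
  have hre : ∀ i, ∑ j, r j * (w j i).re = 0 := by
    intro i
    have h := congrArg Complex.re (hcoord i)
    simpa [Complex.re_sum, Complex.mul_re] using h
  have him : ∀ i, ∑ j, r j * (w j i).im = 0 := by
    intro i
    have h := congrArg Complex.im (hcoord i)
    simpa [Complex.im_sum, Complex.mul_im] using h
  have hu : ∑ j, r j • assocU (w j) = 0 := by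
    funext i
    cases i with
    | inl i => simpa [Finset.sum_apply, assocU] using hre i
    | inr i => simpa [Finset.sum_apply, assocU] using him i
  have hv : ∑ j, r j • assocV (w j) = 0 := by
    funext i
    cases i with
    | inl i =>
      simpa [Finset.sum_apply, assocV, Finset.sum_neg_distrib] using him i
    | inr i => simpa [Finset.sum_apply, assocV] using hre i
  set F : Fin (n + 1) ⊕ Fin (n + 1) → (Fin n ⊕ Fin n → ℝ) :=
    Sum.elim (fun j => assocU (w j)) (fun j => assocV (w j)) with hF
  have hset : ((Set.range fun j => assocU (w j)) ∪ (Set.range fun j => assocV (w j))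
      : Set (Fin n ⊕ Fin n → ℝ)) = Set.range F := (Set.Sum.elim_range _ _).symm
  apply Set.Subset.antisymm
  · -- hard direction
    intro x hx
    rw [hset, convexHull_range_eq_exists_affineCombination] at hx
    obtain ⟨s, w', hw0, hw1, hx⟩ := hx
    rw [s.affineCombination_eq_linear_combination F w' hw1] at hx
    set c : Fin (n + 1) ⊕ Fin (n + 1) → ℝ := fun i => if i ∈ s then w' i else 0 with hc
    have hc0 : ∀ i, 0 ≤ c i := by
      intro i; by_cases h : i ∈ s
      · simpa [hc, h] using hw0 i h
      · simp [hc, h]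
    have hc1 : ∑ i, c i = 1 := by
      rw [← hw1]
      simp [hc, Finset.sum_ite_mem]
    have hcx : ∑ i, c i • F i = x := by
      rw [← hx]
      have : ∀ i ∈ Finset.univ, c i • F i = if i ∈ s then w' i • F i else 0 := by
        intro i _; by_cases h : i ∈ s <;> simp [hc, h]
      rw [Finset.sum_congr rfl this, Finset.sum_ite_mem, Finset.univ_inter]
    set a : Fin (n + 1) → ℝ := fun j => c (Sum.inl j) with ha
    set b : Fin (n + 1) → ℝ := fun j => c (Sum.inr j) with hb
    obtain ⟨ℓ, -, hℓ⟩ := Finset.exists_min_image Finset.univ (fun j => a j / r j)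
      ⟨0, Finset.mem_univ 0⟩
    obtain ⟨k, -, hk⟩ := Finset.exists_min_image Finset.univ (fun j => b j / r j)
      ⟨0, Finset.mem_univ 0⟩
    set t : ℝ := a ℓ / r ℓ with htdef
    set t' : ℝ := b k / r k with ht'def
    have ht0 : 0 ≤ t := div_nonneg (hc0 _) (hr ℓ).le
    have ht'0 : 0 ≤ t' := div_nonneg (hc0 _) (hr k).le
    have haj : ∀ j, t * r j ≤ a j := by
      intro j
      have h1 := hℓ j (Finset.mem_univ j)
      exact (le_div_iff₀ (hr j)).mp h1
    have hbj : ∀ j, t' * r j ≤ b j := by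
      intro j
      have h1 := hk j (Finset.mem_univ j)
      exact (le_div_iff₀ (hr j)).mp h1
    have htℓ : a ℓ - t * r ℓ = 0 := by
      rw [htdef, div_mul_cancel₀ _ (hr ℓ).ne']; ring
    have ht'k : b k - t' * r k = 0 := by
      rw [ht'def, div_mul_cancel₀ _ (hr k).ne']; ring
    refine Set.mem_iUnion.2 ⟨ℓ, Set.mem_iUnion.2 ⟨k, ?_⟩⟩
    set S : Set (Fin n ⊕ Fin n → ℝ) :=
      ({0} ∪ ((fun j => assocU (w j)) '' {ℓ}ᶜ) ∪ ((fun j => assocV (w j)) '' {k}ᶜ)) with hS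
    set W : Option (Fin (n + 1) ⊕ Fin (n + 1)) → ℝ :=
      fun i => match i with
        | none => t + t'
        | some (Sum.inl j) => a j - t * r j
        | some (Sum.inr j) => b j - t' * r j with hW
    set Z : Option (Fin (n + 1) ⊕ Fin (n + 1)) → (Fin n ⊕ Fin n → ℝ) :=
      fun i => match i with
        | none => 0
        | some (Sum.inl j) => if j = ℓ then 0 else assocU (w j)
        | some (Sum.inr j) => if j = k then 0 else assocV (w j) with hZ
    apply mem_convexHull_of_exists_fintype W Z
    · rintro (_ | i | i)
      · exact add_nonneg ht0 ht'0
      · exact sub_nonneg.2 (haj _)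
      · exact sub_nonneg.2 (hbj _)
    · rw [Fintype.sum_option, Fintype.sum_sum_type]
      have h1 : ∑ j, (a j - t * r j) = ∑ j, a j - t := by
        rw [Finset.sum_sub_distrib, ← Finset.mul_sum, hr1, mul_one]
      have h2 : ∑ j, (b j - t' * r j) = ∑ j, b j - t' := by
        rw [Finset.sum_sub_distrib, ← Finset.mul_sum, hr1, mul_one]
      have h3 : ∑ j, a j + ∑ j, b j = 1 := by
        rw [← hc1, Fintype.sum_sum_type]
      simp only [hW]
      rw [h1, h2]; linarith
    · rintro (_ | i | i)
      · exact Or.inl (Or.inl rfl)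
      · by_cases h : i = ℓ
        · simp only [hZ, h, if_pos rfl]
          exact Or.inl (Or.inl rfl)
        · simp only [hZ, if_neg h]
          exact Or.inl (Or.inr ⟨i, h, rfl⟩)
      · by_cases h : i = k
        · simp only [hZ, h, if_pos rfl]
          exact Or.inl (Or.inl rfl)
        · simp only [hZ, if_neg h]
          exact Or.inr ⟨i, h, rfl⟩
    · rw [Fintype.sum_option, Fintype.sum_sum_type]
      have e1 : ∀ j, W (some (Sum.inl j)) • Z (some (Sum.inl j))
          = (a j - t * r j) • assocU (w j) := by
        intro j
        by_cases h : j = ℓ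
        · subst h; simp [hW, hZ, htℓ]
        · simp [hW, hZ, h]
      have e2 : ∀ j, W (some (Sum.inr j)) • Z (some (Sum.inr j))
          = (b j - t' * r j) • assocV (w j) := by
        intro j
        by_cases h : j = k
        · subst h; simp [hW, hZ, ht'k]
        · simp [hW, hZ, h]
      simp only [e1, e2]
      have h1 : ∑ j, (a j - t * r j) • assocU (w j) = ∑ j, a j • assocU (w j) := by
        simp only [sub_smul, Finset.sum_sub_distrib, mul_smul, ← Finset.smul_sum, hu,
          smul_zero, sub_zero]
      have h2 : ∑ j, (b j - t' * r j) • assocV (w j) = ∑ j, b j • assocV (w j) := by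
        simp only [sub_smul, Finset.sum_sub_distrib, mul_smul, ← Finset.smul_sum, hv,
          smul_zero, sub_zero]
      rw [h1, h2]
      have : (W none) • Z none = 0 := by simp [hZ]
      rw [this, zero_add, ← hcx, Fintype.sum_sum_type]
      rfl
  · -- easy direction
    refine Set.iUnion_subset fun ℓ => Set.iUnion_subset fun k => ?_
    apply convexHull_min _ (convex_convexHull ℝ _)
    rintro x ((hx | ⟨j, -, rfl⟩) | ⟨j, -, rfl⟩)
    · -- x = 0
      rw [Set.mem_singleton_iff] at hx
      subst hx
      apply mem_convexHull_of_exists_fintype r (fun j => assocU (w j))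
        (fun j => (hr j).le) hr1 (fun j => Or.inl ⟨j, rfl⟩) hu
    · exact subset_convexHull ℝ _ (Or.inl ⟨j, rfl⟩)
    · exact subset_convexHull ℝ _ (Or.inr ⟨j, rfl⟩)
end

section
/- Let n ≥ 1 and let v_0, …, v_n be n+1 points on the unit sphere S^{n-1} in R^n whose convex hull has n-dimensional volume at least as large as the volume of the convex hull of any other n+1 points on S^{n-1}. Then all pairwise Euclidean distances between the v_j are equal (i.e., the convex hull is a regular simplex). -/
/-!
The volume of the simplex with vertices `v₀, …, vₙ` is `|det (v₁ - v₀, …, vₙ - v₀)|` times a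
constant. With the other vertices fixed, this determinant is an affine function `⟪w, x⟫ + c` of the
vertex `x = vⱼ`, vanishing at every other vertex, so `⟪w, vₖ⟫ = -c` for all `k ≠ j`. Maximality
makes `vⱼ` a maximum of `|⟪w, x⟫ + c|` on the sphere, which forces `vⱼ` to be parallel to `w`
(and `w ≠ 0` because a maximal simplex is nondegenerate). Hence `⟪vⱼ, vₖ⟫` does not depend on
`k ≠ j`, so all the inner products `⟪vⱼ, vₖ⟫` with `j ≠ k` agree, and so do the distances
`‖vⱼ - vₖ‖² = 2 - 2 ⟪vⱼ, vₖ⟫`.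
-/

open MeasureTheory Metric Set RealInnerProductSpace Pointwise Module

theorem Module.Basis.det_constr {R M ι : Type*} [CommRing R] [AddCommGroup M] [Module R M]
    [Fintype ι] [DecidableEq ι] (b : Basis ι R M) (f : ι → M) :
    LinearMap.det (b.constr R f) = b.det f := by
  have hf : b.constr R f ∘ b = f := funext (b.constr_basis R f)
  rw [← mul_one (LinearMap.det _), ← b.det_self, ← b.det_comp, hf]

section SphereExtremum

variable {F : Type*} [NormedAddCommGroup F] [InnerProductSpace ℝ F]

theorem exists_eq_smul_of_isMaxOn_abs_inner_add {w p : F} {c : ℝ} (hp : ‖p‖ = 1)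
    (hmax : IsMaxOn (fun x => |⟪w, x⟫ + c|) (sphere 0 1) p) : ∃ r : ℝ, w = r • p := by
  rcases eq_or_ne w 0 with rfl | hw
  · exact ⟨0, (zero_smul ℝ p).symm⟩
  set u := ‖w‖⁻¹ • w
  have hu : ‖u‖ = 1 := by
    rw [norm_smul, norm_inv, norm_norm, inv_mul_cancel₀ (norm_ne_zero_iff.2 hw)]
  have hwu : ⟪w, u⟫ = ‖w‖ := by
    rw [real_inner_smul_right, real_inner_self_eq_norm_sq]
    field_simp
  have hplus : |‖w‖ + c| ≤ |⟪w, p⟫ + c| := by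
    simpa [hwu] using hmax (mem_sphere_zero_iff_norm.2 hu)
  have hminus : |-‖w‖ + c| ≤ |⟪w, p⟫ + c| := by
    simpa [hwu, inner_neg_right] using hmax (mem_sphere_zero_iff_norm.2 ((norm_neg u).trans hu))
  -- `max |‖w‖ + c| |-‖w‖ + c| = ‖w‖ + |c|`, so `|⟪w, p⟫| ≥ ‖w‖`
  have hcs : |⟪w, p⟫| = ‖w‖ * ‖p‖ := by
    refine le_antisymm (abs_real_inner_le_norm w p) ?_
    rw [hp, mul_one]
    cases abs_cases c <;>
      linarith [le_abs_self (‖w‖ + c), neg_le_abs (-‖w‖ + c), abs_add_le ⟪w, p⟫ c]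
  obtain ⟨r, hr, rfl⟩ := (norm_inner_eq_norm_iff hw (norm_ne_zero_iff.1 (hp ▸ one_ne_zero))).1
    (by rwa [Real.norm_eq_abs])
  exact ⟨r⁻¹, (inv_smul_smul₀ hr w).symm⟩

end SphereExtremum

section SimplexDet

variable {E : Type*} [NormedAddCommGroup E] [NormedSpace ℝ E] {n : ℕ}

noncomputable def simplexDet (b : Basis (Fin n) ℝ E) (v : Fin (n + 1) → E) : ℝ :=
  b.det fun i => v i.succ - v 0

theorem simplexDet_update_succ (b : Basis (Fin n) ℝ E) (v : Fin (n + 1) → E) (i : Fin n)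
    (x : E) :
    simplexDet b (Function.update v i.succ x) =
      b.det.toMultilinearMap.toLinearMap (fun k => v k.succ - v 0) i (x - v 0) := by
  rw [simplexDet, MultilinearMap.toLinearMap_apply]
  refine congrArg b.det (funext fun k => ?_)
  rcases eq_or_ne k i with rfl | hk
  · simp [(Fin.succ_ne_zero k).symm]
  · simp [hk, (Fin.succ_ne_zero i).symm]

theorem simplexDet_update_succ_of_ne (b : Basis (Fin n) ℝ E) (v : Fin (n + 1) → E)
    {i : Fin n} {m : Fin (n + 1)} (hm : m ≠ i.succ) :
    simplexDet b (Function.update v i.succ (v m)) = 0 := by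
  rw [simplexDet_update_succ, MultilinearMap.toLinearMap_apply]
  induction m using Fin.cases with
  | zero => simp
  | succ k =>
    have hk : k ≠ i := fun h => hm (h ▸ rfl)
    exact b.det.map_eq_zero_of_eq _ (by simp [hk]) hk.symm

theorem simplexDet_cons_neg (b : Basis (Fin n) ℝ E) [NeZero n] :
    simplexDet b (Fin.cons (-b 0) b) = 2 := by
  have hM : b.toMatrix (fun i => b i - -b 0) = 1 + Matrix.vecMulVec (Pi.single 0 1) 1 := by
    ext i k
    simp [Basis.toMatrix_apply, Matrix.one_apply, Finsupp.single_apply, Pi.single_apply,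
      eq_comm]
  rw [simplexDet, b.det_apply]
  simp only [Fin.cons_succ, Fin.cons_zero]
  rw [hM, Matrix.vecMulVec_eq Unit, Matrix.det_one_add_replicateCol_mul_replicateRow]
  norm_num

theorem convexHull_range_eq_vadd_image (b : Basis (Fin n) ℝ E) (v : Fin (n + 1) → E) :
    convexHull ℝ (range v) =
      v 0 +ᵥ b.constr ℝ (fun i => v i.succ - v 0) '' convexHull ℝ (range (Fin.cons 0 b)) := by
  set T := b.constr ℝ (fun i => v i.succ - v 0)
  let g : E →ᵃ[ℝ] E := (AffineEquiv.constVAdd ℝ E (v 0)).toAffineMap.comp T.toAffineMap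
  have hg : g ∘ Fin.cons 0 b = v := by
    funext j
    induction j using Fin.cases with
    | zero => simp [g]
    | succ i => simp [g, T]
  conv_lhs => rw [← hg, range_comp, ← AffineMap.image_convexHull]
  rw [← image_vadd, image_image]
  rfl

variable [FiniteDimensional ℝ E] [MeasurableSpace E] (μ : Measure E) [μ.IsAddHaarMeasure]

theorem addHaar_convexHull_range_cons_zero_pos (b : Basis (Fin n) ℝ E) :
    0 < μ (convexHull ℝ (range (Fin.cons 0 b : Fin (n + 1) → E))) := by
  set s : Fin (n + 1) → E := Fin.cons 0 b
  have hspan : affineSpan ℝ (range s) = ⊤ := by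
    rw [AffineSubspace.affineSpan_eq_top_iff_vectorSpan_eq_top_of_nonempty ℝ _ _
      (range_nonempty _), eq_top_iff, ← b.span_eq]
    refine Submodule.span_le.2 ?_
    rintro _ ⟨i, rfl⟩
    have hi : b i = s i.succ -ᵥ s 0 := by simp [s]
    exact hi ▸ vsub_mem_vectorSpan ℝ (mem_range_self _) (mem_range_self _)
  obtain ⟨x, hx⟩ := interior_convexHull_nonempty_iff_affineSpan_eq_top.2 hspan
  exact (isOpen_interior.measure_pos μ ⟨x, hx⟩).trans_le (measure_mono interior_subset)

variable [BorelSpace E]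

theorem addHaar_convexHull_range (b : Basis (Fin n) ℝ E) (v : Fin (n + 1) → E) :
    μ (convexHull ℝ (range v)) =
      ENNReal.ofReal |simplexDet b v| * μ (convexHull ℝ (range (Fin.cons 0 b))) := by
  rw [convexHull_range_eq_vadd_image b, measure_vadd, Measure.addHaar_image_linearMap, b.det_constr,
    simplexDet]

theorem abs_simplexDet_le_of_addHaar_le (b : Basis (Fin n) ℝ E) {u v : Fin (n + 1) → E}
    (h : μ (convexHull ℝ (range u)) ≤ μ (convexHull ℝ (range v))) :
    |simplexDet b u| ≤ |simplexDet b v| := by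
  rw [addHaar_convexHull_range μ b u, addHaar_convexHull_range μ b v,
    ENNReal.mul_le_mul_iff_left (addHaar_convexHull_range_cons_zero_pos μ b).ne'
      ((finite_range _).isCompact_convexHull ℝ).measure_lt_top.ne] at h
  exact (ENNReal.ofReal_le_ofReal_iff (abs_nonneg _)).1 h

def IsMaxVolumeOnSphere {ι : Type*} (v : ι → E) : Prop :=
  ∀ u : ι → E, (∀ j, ‖u j‖ = 1) → μ (convexHull ℝ (range u)) ≤ μ (convexHull ℝ (range v))

end SimplexDet

section MaxVolume

variable {E : Type*} [NormedAddCommGroup E] [InnerProductSpace ℝ E] [FiniteDimensional ℝ E]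
  {n : ℕ}

theorem exists_simplexDet_update_succ_eq_inner_add (b : Basis (Fin n) ℝ E)
    (v : Fin (n + 1) → E) (i : Fin n) :
    ∃ (w : E) (c : ℝ), ∀ x, simplexDet b (Function.update v i.succ x) = ⟪w, x⟫ + c := by
  set L := b.det.toMultilinearMap.toLinearMap (fun k => v k.succ - v 0) i
  refine ⟨(InnerProductSpace.toDual ℝ E).symm (LinearMap.toContinuousLinearMap L), -L (v 0),
    fun x => ?_⟩
  rw [simplexDet_update_succ, InnerProductSpace.toDual_symm_apply, map_sub]
  simp only [LinearMap.coe_toContinuousLinearMap', L]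
  ring

theorem inner_succ_eq_of_abs_simplexDet_le (b : Basis (Fin n) ℝ E) {v : Fin (n + 1) → E}
    (hv : ∀ j, ‖v j‖ = 1)
    (hmax : ∀ u : Fin (n + 1) → E, (∀ j, ‖u j‖ = 1) → |simplexDet b u| ≤ |simplexDet b v|)
    (hD : simplexDet b v ≠ 0) (i : Fin n) {k l : Fin (n + 1)} (hk : k ≠ i.succ)
    (hl : l ≠ i.succ) : ⟪v i.succ, v k⟫ = ⟪v i.succ, v l⟫ := by
  obtain ⟨w, c, hwc⟩ := exists_simplexDet_update_succ_eq_inner_add b v i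
  have hvanish : ∀ m ≠ i.succ, ⟪w, v m⟫ = -c := fun m hm => by
    linarith [hwc (v m), simplexDet_update_succ_of_ne b v hm]
  have hDv : simplexDet b v = ⟪w, v i.succ⟫ + c := by simpa using hwc (v i.succ)
  have hmaxOn : IsMaxOn (fun x => |⟪w, x⟫ + c|) (sphere 0 1) (v i.succ) := by
    intro x hx
    show |⟪w, x⟫ + c| ≤ |⟪w, v i.succ⟫ + c|
    have hunit : ∀ j, ‖Function.update v i.succ x j‖ = 1 := by
      intro j
      rcases eq_or_ne j i.succ with rfl | hj
      · simpa using hx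
      · simp [hj, hv]
    simpa only [hwc, hDv] using hmax _ hunit
  obtain ⟨r, rfl⟩ := exists_eq_smul_of_isMaxOn_abs_inner_add (hv _) hmaxOn
  have hr : r ≠ 0 := by
    rintro rfl
    have hc := hvanish k hk
    simp only [zero_smul, inner_zero_left] at hc hDv
    exact hD (by linarith)
  have hkl := (hvanish k hk).trans (hvanish l hl).symm
  simp only [real_inner_smul_left] at hkl
  exact mul_left_cancel₀ hr hkl

variable [MeasurableSpace E] [BorelSpace E] (μ : Measure E) [μ.IsAddHaarMeasure]

theorem simplexDet_ne_zero_of_isMaxVolume (e : OrthonormalBasis (Fin n) ℝ E) [NeZero n]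
    {v : Fin (n + 1) → E}
    (hmax : IsMaxVolumeOnSphere μ v) :
    simplexDet e.toBasis v ≠ 0 := by
  have hunit : ∀ j, ‖(Fin.cons (-e 0) e : Fin (n + 1) → E) j‖ = 1 :=
    Fin.cases (by simp) (by simp)
  have h := abs_simplexDet_le_of_addHaar_le μ e.toBasis (hmax _ hunit)
  have h2 := simplexDet_cons_neg e.toBasis
  simp only [OrthonormalBasis.coe_toBasis] at h2
  intro h0
  rw [h2, h0] at h
  norm_num at h

theorem inner_succ_eq_of_isMaxVolume (e : OrthonormalBasis (Fin n) ℝ E) [NeZero n]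
    {v : Fin (n + 1) → E} (hv : ∀ j, ‖v j‖ = 1)
    (hmax : IsMaxVolumeOnSphere μ v)
    (i : Fin n) {k l : Fin (n + 1)} (hk : k ≠ i.succ) (hl : l ≠ i.succ) :
    ⟪v i.succ, v k⟫ = ⟪v i.succ, v l⟫ :=
  inner_succ_eq_of_abs_simplexDet_le e.toBasis hv
    (fun u hu => abs_simplexDet_le_of_addHaar_le μ e.toBasis (hmax u hu))
    (simplexDet_ne_zero_of_isMaxVolume μ e hmax) i hk hl

theorem inner_eq_of_isMaxVolume (e : OrthonormalBasis (Fin n) ℝ E) [NeZero n]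
    {v : Fin (n + 1) → E} (hv : ∀ j, ‖v j‖ = 1)
    (hmax : IsMaxVolumeOnSphere μ v)
    {j k l : Fin (n + 1)} (hk : k ≠ j) (hl : l ≠ j) : ⟪v j, v k⟫ = ⟪v j, v l⟫ := by
  induction j using Fin.cases with
  | succ i => exact inner_succ_eq_of_isMaxVolume μ e hv hmax i hk hl
  | zero =>
    -- relabel so that the vertex `v 0` sits at a position `Fin.succ _`
    set σ := Equiv.swap (0 : Fin (n + 1)) (Fin.succ 0)
    have hrange : range (v ∘ σ) = range v := σ.surjective.range_comp v
    have hσ : ∀ {m}, m ≠ 0 → σ m ≠ Fin.succ 0 := fun hm =>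
      (Equiv.swap_apply_left (0 : Fin (n + 1)) (Fin.succ 0)) ▸ σ.injective.ne hm
    have := inner_succ_eq_of_isMaxVolume μ e (v := v ∘ σ) (fun j => hv _)
      (fun u hu => hrange ▸ hmax u hu) 0 (hσ hk) (hσ hl)
    simpa [σ] using this

theorem inner_eq_inner_of_isMaxVolume (e : OrthonormalBasis (Fin n) ℝ E) [NeZero n]
    {v : Fin (n + 1) → E} (hv : ∀ j, ‖v j‖ = 1)
    (hmax : IsMaxVolumeOnSphere μ v)
    {j k j' k' : Fin (n + 1)} (hjk : j ≠ k) (hjk' : j' ≠ k') :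
    ⟪v j, v k⟫ = ⟪v j', v k'⟫ := by
  rcases eq_or_ne j j' with rfl | hjj'
  · exact inner_eq_of_isMaxVolume μ e hv hmax hjk.symm hjk'.symm
  · calc ⟪v j, v k⟫ = ⟪v j, v j'⟫ := inner_eq_of_isMaxVolume μ e hv hmax hjk.symm hjj'.symm
      _ = ⟪v j', v j⟫ := real_inner_comm _ _
      _ = ⟪v j', v k'⟫ := inner_eq_of_isMaxVolume μ e hv hmax hjj' hjk'.symm

end MaxVolume

theorem stmt13_general (n : ℕ) (v : Fin (n + 1) → EuclideanSpace ℝ (Fin n))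
    (hv : ∀ j, ‖v j‖ = 1)
    (hmax : ∀ u : Fin (n + 1) → EuclideanSpace ℝ (Fin n), (∀ j, ‖u j‖ = 1) →
      MeasureTheory.volume (convexHull ℝ (Set.range u)) ≤
        MeasureTheory.volume (convexHull ℝ (Set.range v))) :
    ∀ j k j' k' : Fin (n + 1), j ≠ k → j' ≠ k' → ‖v j - v k‖ = ‖v j' - v k'‖ := by
  intro j k j' k' hjk hjk'
  obtain _ | n := n
  · exact absurd (Subsingleton.elim (α := Fin 1) j k) hjk
  have hinner :=
    inner_eq_inner_of_isMaxVolume volume (EuclideanSpace.basisFun _ ℝ) hv hmax hjk hjk'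
  rw [← sq_eq_sq₀ (norm_nonneg _) (norm_nonneg _), norm_sub_sq_real, norm_sub_sq_real, hv, hv, hv,
    hv, hinner]

/-- If `v₀, …, vₙ` are `n + 1` points on the unit sphere in `ℝⁿ` whose convex hull has
volume at least as large as that of any other `n + 1` points on the unit sphere, then
all pairwise distances between the `vⱼ` are equal, i.e. the convex hull is a regular
simplex. -/
theorem stmt13 (n : ℕ) (hn : 1 ≤ n) (v : Fin (n + 1) → EuclideanSpace ℝ (Fin n))
    (hv : ∀ j, ‖v j‖ = 1)
    (hmax : ∀ u : Fin (n + 1) → EuclideanSpace ℝ (Fin n), (∀ j, ‖u j‖ = 1) →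
      MeasureTheory.volume (convexHull ℝ (Set.range u)) ≤
        MeasureTheory.volume (convexHull ℝ (Set.range v))) :
    ∀ j k j' k' : Fin (n + 1), j ≠ k → j' ≠ k' → ‖v j - v k‖ = ‖v j' - v k'‖ :=
  stmt13_general n v hv hmax
end

section
/- Let k ≥ 2 and let v_0, …, v_k be k+1 unit vectors in R^2. Then the minimum, over all pairs 0 ≤ i < j ≤ k, of |det(v_i, v_j)| is at most sin(π/(k+1)). -/
/-!
Write `v j = (cos θⱼ, sin θⱼ)`. Then `|det(vᵢ, vⱼ)| = |sin (θᵢ - θⱼ)|`, which only depends on the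
angles modulo `π`, so we may take every `θⱼ ∈ [0, π)`. After sorting, the `k` consecutive gaps
and the wrap-around gap `π - (θ_max - θ_min)` sum to `π`, so one of them is at most
`π / (k + 1) ≤ π / 2`, where `sin` is increasing.
-/

open Real

theorem EuclideanSpace.exists_eq_cos_sin_of_norm_eq_one {x : EuclideanSpace ℝ (Fin 2)}
    (hx : ‖x‖ = 1) : ∃ θ : ℝ, x 0 = cos θ ∧ x 1 = sin θ := by
  have hz : ‖Complex.orthonormalBasisOneI.repr.symm x‖ = 1 := by
    rwa [LinearIsometryEquiv.norm_map]
  obtain ⟨θ, hθ⟩ := (Complex.norm_eq_one_iff _).1 hz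
  rw [Complex.orthonormalBasisOneI_repr_symm_apply] at hθ
  refine ⟨θ, ?_, ?_⟩
  · simpa using congrArg Complex.re hθ.symm
  · simpa using congrArg Complex.im hθ.symm

theorem Matrix.det_fin_two_cos_sin (a b : ℝ) :
    !![cos a, cos b; sin a, sin b].det = sin (b - a) := by
  rw [Matrix.det_fin_two_of, sin_sub]; ring

theorem Real.abs_sin_sub_comm (x y : ℝ) : |sin (x - y)| = |sin (y - x)| := by
  rw [← neg_sub, sin_neg, abs_neg]

theorem Real.abs_sin_add_int_mul_pi (x : ℝ) (n : ℤ) : |sin (x + n * π)| = |sin x| := by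
  rw [sin_add_int_mul_pi, abs_mul, abs_zpow, abs_neg, abs_one, one_zpow, one_mul]

theorem Real.abs_sin_toIcoMod_sub_toIcoMod (a x y : ℝ) :
    |sin (toIcoMod pi_pos a x - toIcoMod pi_pos a y)| = |sin (x - y)| := by
  have hx := self_sub_toIcoMod_eq_mul pi_pos a x
  have hy := self_sub_toIcoMod_eq_mul pi_pos a y
  rw [show toIcoMod pi_pos a x - toIcoMod pi_pos a y
      = x - y + ((toIcoDiv pi_pos a y - toIcoDiv pi_pos a x : ℤ) : ℝ) * π by push_cast; linarith,
    abs_sin_add_int_mul_pi]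

theorem Real.abs_sin_le_sin {x y : ℝ} (hxy : |x| ≤ y) (hy : y ≤ π / 2) : |sin x| ≤ sin y := by
  obtain ⟨hyx, hxy⟩ := abs_le.1 hxy
  rw [abs_le, ← sin_neg]
  exact ⟨sin_le_sin_of_le_of_le_pi_div_two (by linarith) (by linarith) hyx,
    sin_le_sin_of_le_of_le_pi_div_two (by linarith) hy hxy⟩

theorem Fin.sum_succ_sub_castSucc {M : Type*} [AddCommGroup M] {n : ℕ} (f : Fin (n + 1) → M) :
    ∑ i : Fin n, (f i.succ - f i.castSucc) = f (Fin.last n) - f 0 := by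
  induction n with
  | zero => simp
  | succ n ih =>
    have := ih (f ∘ Fin.castSucc)
    simp only [Function.comp_apply, ← Fin.succ_castSucc, Fin.castSucc_zero] at this
    rw [Fin.sum_univ_castSucc, this, Fin.succ_last]
    abel

theorem exists_gap_le_or_wrap_le {k : ℕ} (ψ : Fin (k + 1) → ℝ) (L : ℝ) :
    (∃ i : Fin k, ψ i.succ - ψ i.castSucc ≤ L / (k + 1)) ∨
      L - (ψ (Fin.last k) - ψ 0) ≤ L / (k + 1) := by
  by_contra! h
  obtain ⟨hgap, hwrap⟩ := h
  have hsum : k * (L / (k + 1)) ≤ ψ (Fin.last k) - ψ 0 := by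
    rw [← Fin.sum_succ_sub_castSucc]
    have := Finset.sum_le_sum fun (i : Fin k) (_ : i ∈ Finset.univ) => (hgap i).le
    simpa only [Finset.sum_const, Finset.card_univ, Fintype.card_fin, nsmul_eq_mul] using this
  have : (k + 1) * (L / (k + 1)) = L := by field_simp
  linarith

theorem exists_ne_abs_sin_sub_le {k : ℕ} (hk : 1 ≤ k) (θ : Fin (k + 1) → ℝ)
    (hθ : ∀ i, θ i ∈ Set.Icc 0 π) :
    ∃ i j, i ≠ j ∧ |sin (θ i - θ j)| ≤ sin (π / (k + 1)) := by
  have hπk : π / (k + 1) ≤ π / 2 := by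
    gcongr
    norm_cast
    omega
  set σ := Tuple.sort θ
  have hmono : Monotone (θ ∘ σ) := Tuple.monotone_sort θ
  rcases exists_gap_le_or_wrap_le (θ ∘ σ) π with ⟨i, hi⟩ | hwrap
  · refine ⟨σ i.castSucc, σ i.succ, σ.injective.ne (Fin.castSucc_lt_succ (i := i)).ne, ?_⟩
    have := hmono (Fin.castSucc_lt_succ (i := i)).le
    simp only [Function.comp_apply] at hi this
    exact abs_sin_le_sin (by rw [abs_sub_comm, abs_of_nonneg (by linarith)]; exact hi) hπk
  · refine ⟨σ 0, σ (Fin.last k), σ.injective.ne (by simp [Fin.ext_iff]; omega), ?_⟩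
    have := hmono (Fin.zero_le (Fin.last k))
    have h0 := hθ (σ 0)
    have hlast := hθ (σ (Fin.last k))
    simp only [Function.comp_apply, Set.mem_Icc] at hwrap this h0 hlast
    rw [← abs_neg, ← sin_add_pi]
    exact abs_sin_le_sin (by rw [abs_of_nonneg (by linarith)]; linarith) hπk

/-- For `k + 1` unit vectors `v₀, …, v_k` in `ℝ²` (`k ≥ 2`), the minimum over all pairs
`i < j` of `|det(vᵢ, vⱼ)|` is at most `sin (π / (k+1))`. -/
theorem stmt16 (k : ℕ) (hk : 2 ≤ k) (v : Fin (k + 1) → EuclideanSpace ℝ (Fin 2))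
    (hv : ∀ j, ‖v j‖ = 1) :
    ∃ i j : Fin (k + 1), i < j ∧
      |Matrix.det !![v i 0, v j 0; v i 1, v j 1]| ≤
        Real.sin (Real.pi / (k + 1)) := by
  choose θ hθ using fun j => EuclideanSpace.exists_eq_cos_sin_of_norm_eq_one (hv j)
  set φ := fun j => toIcoMod pi_pos 0 (θ j)
  have hdet : ∀ i j, |Matrix.det !![v i 0, v j 0; v i 1, v j 1]| = |sin (φ i - φ j)| := by
    intro i j
    rw [(hθ i).1, (hθ i).2, (hθ j).1, (hθ j).2, Matrix.det_fin_two_cos_sin, abs_sin_sub_comm,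
      abs_sin_toIcoMod_sub_toIcoMod]
  obtain ⟨i, j, hij, hle⟩ := exists_ne_abs_sin_sub_le (by omega) φ
    fun j => Set.Ico_subset_Icc_self (toIcoMod_mem_Ico' pi_pos (θ j))
  rcases hij.lt_or_gt with hlt | hgt
  · exact ⟨i, j, hlt, by rwa [hdet]⟩
  · exact ⟨j, i, hgt, by rwa [hdet, abs_sin_sub_comm]⟩
end
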